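/- arXiv:2103.03823 — 7 statements merged into one kernel-verified Lean document; each statement's English description precedes it below -/
import Mathlib

section
/- Let h : {1,…,n} → ℤ be nondecreasing, let W_P ⊆ S_n be its stabilizer (so the P-blocks are the level sets of h), and let I_Q ⊆ {1,…,n−1} determine Q-blocks with block-reversal involution w_{Q,0} as above. Let w ∈ S_n be increasing on the P-blocks (i.e. w is the minimal-length representative of its coset wW_P, w ∈ W^P). Then the following are equivalent: (i) w(h) = h∘w⁻¹ is strictly Q-dominant, i.e. h(w⁻¹(i)) > h(w⁻¹(i+1)) for every i ∈ I_Q; (ii) the permutation w₁ := w_{Q,0}∘w is increasing on the P-blocks and w₁⁻¹ is increasing on the Q-blocks (i.e. w₁ ∈ W^P ∩ ^QW, so that wW_P = w_{Q,0}w₁W_P with w₁ ∈ W^P ∩ ^QW and w_{Q,0}w₁ ∈ W^P). This is, for the type-A Weyl groups occurring in the paper, the combinatorial content of the theorem that the irreducible component Z_{P,w} of the generalized Steinberg variety is contained in Z_{Q,P} if and only if w(h) is strictly Q-dominant for one (equivalently every) P-regular antidominant coweight h. -/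
/-- One-step relation generating a standard-parabolic ("interval") equivalence relation on
`{0,…,n-1}` (0-based reindexing of `{1,…,n}`): `a ~ a+1` whenever `a ∈ I`. -/
def ParabolicStep (n : ℕ) (I : Set ℕ) (a b : Fin n) : Prop :=
  (a : ℕ) ∈ I ∧ (b : ℕ) = (a : ℕ) + 1

/-- The interval ("standard parabolic") equivalence relation on `Fin n` generated by `I`. -/
def ParabolicRel (n : ℕ) (I : Set ℕ) : Fin n → Fin n → Prop :=
  Relation.EqvGen (ParabolicStep n I)

/-!
Write `g = h ∘ w⁻¹`. Strict `Q`-dominance of `g` on consecutive elements of `I_Q` is the same as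
`g` being strictly decreasing on every `Q`-block, and since `w` is increasing on the level sets
of the monotone `h`, this is the same as `w⁻¹` being strictly decreasing on every `Q`-block.
As `w_{Q,0}` reverses each block, that is exactly `w₁⁻¹ = w⁻¹ ∘ w_{Q,0}` being increasing on the
`Q`-blocks. Finally `w₁ ∈ W^P` comes for free: if `a < b` lie in one `P`-block then
`w a < w b`, and `w a`, `w b` cannot lie in one `Q`-block (on which `g` is strictly decreasing
while `g (w a) = h a = h b = g (w b)`), and `w_{Q,0}` preserves the order of elements of
different blocks.
-/

theorem Fin.val_orderSucc_of_not_isMax {n : ℕ} {c : Fin n} (hc : ¬ IsMax c) :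
    ((Order.succ c : Fin n) : ℕ) = c + 1 :=
  (Nat.covBy_iff_add_one_eq.mp (Fin.covBy_iff.mp (Order.covBy_succ_of_not_isMax hc))).symm

namespace ParabolicRel

variable {n : ℕ} {I : Set ℕ} {a b c : Fin n}

theorem refl (a : Fin n) : ParabolicRel n I a a := Relation.EqvGen.refl a

theorem symm (hab : ParabolicRel n I a b) : ParabolicRel n I b a := Relation.EqvGen.symm _ _ hab

theorem trans (hab : ParabolicRel n I a b) (hbc : ParabolicRel n I b c) : ParabolicRel n I a c :=
  Relation.EqvGen.trans _ _ _ hab hbc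

theorem of_mem (ha : (a : ℕ) ∈ I) (hb : (b : ℕ) = a + 1) : ParabolicRel n I a b :=
  Relation.EqvGen.rel _ _ ⟨ha, hb⟩

theorem le_iff_le_of_notMem {k : ℕ} (hk : k ∉ I) (hab : ParabolicRel n I a b) :
    (a : ℕ) ≤ k ↔ (b : ℕ) ≤ k := by
  induction hab with
  | rel a b hstep =>
    obtain ⟨haI, hb⟩ := hstep
    have : (a : ℕ) ≠ k := fun h => hk (h ▸ haI)
    omega
  | refl => rfl
  | symm _ _ _ ih => exact ih.symm
  | trans _ _ _ _ _ ih₁ ih₂ => exact ih₁.trans ih₂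

theorem mem_of_le_of_lt (hab : ParabolicRel n I a b) {k : ℕ} (hak : (a : ℕ) ≤ k)
    (hkb : k < b) : k ∈ I := by
  by_contra hk
  have := hab.le_iff_le_of_notMem hk
  omega

theorem of_forall_mem (hab : a ≤ b) (hI : ∀ k : ℕ, (a : ℕ) ≤ k → k < b → k ∈ I) :
    ParabolicRel n I a b := by
  suffices ∀ m, (a : ℕ) ≤ m → ∀ hmb : m ≤ b, ParabolicRel n I a ⟨m, by omega⟩ from
    this b hab le_rfl
  intro m ham
  induction m, ham using Nat.le_induction with
  | base => exact fun _ => refl a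
  | succ m ham ih => exact fun hmb => (ih (by omega)).trans (of_mem (hI m ham (by omega)) rfl)

theorem exists_notMem_of_not_rel (hab : a < b) (h : ¬ ParabolicRel n I a b) :
    ∃ k ∉ I, (a : ℕ) ≤ k ∧ k < b := by
  contrapose! h
  exact of_forall_mem hab.le fun k h₁ h₂ => by_contra fun hk => (h k hk h₁).not_gt h₂

theorem ordConnected_setOf (a : Fin n) : {b | ParabolicRel n I a b}.OrdConnected :=
  ⟨fun _ hx _ hy _ ⟨hxc, hcy⟩ => hx.trans <| of_forall_mem hxc
    fun _ h₁ h₂ => (hx.symm.trans hy).mem_of_le_of_lt h₁ (h₂.trans_le (Fin.le_def.mp hcy))⟩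

theorem forall_succ_lt_iff {α : Type*} [Preorder α] (f : Fin n → α) :
    (∀ i j : Fin n, (i : ℕ) ∈ I → (j : ℕ) = (i : ℕ) + 1 → f j < f i) ↔
      ∀ a b : Fin n, a < b → ParabolicRel n I a b → f b < f a := by
  refine ⟨fun hf a b hab hrel => ?_, fun hf i j hi hj =>
    hf i j (Fin.lt_def.mpr (by omega)) (of_mem hi hj)⟩
  refine strictAntiOn_of_succ_lt (ordConnected_setOf a) (fun c hc hca hsa => ?_)
    (refl a) hrel hab
  have hsucc := Fin.val_orderSucc_of_not_isMax hc
  exact hf c _ (hca.symm.trans hsa |>.mem_of_le_of_lt le_rfl (by omega)) hsucc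

end ParabolicRel

def IsBlockReversal (n : ℕ) (I : Set ℕ) (σ : Equiv.Perm (Fin n)) : Prop :=
  ∀ a : Fin n, ∃ u v : Fin n,
    (∀ b : Fin n, ParabolicRel n I a b ↔ (u ≤ b ∧ b ≤ v)) ∧
      ((σ a : ℕ) + (a : ℕ) = (u : ℕ) + (v : ℕ))

namespace IsBlockReversal

variable {n : ℕ} {I : Set ℕ} {σ : Equiv.Perm (Fin n)} {a b : Fin n}

theorem parabolicRel_apply (hσ : IsBlockReversal n I σ) (a : Fin n) :
    ParabolicRel n I a (σ a) := by
  obtain ⟨u, v, hblock, hsum⟩ := hσ a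
  obtain ⟨hua, hav⟩ := (hblock a).mp (.refl a)
  rw [Fin.le_def] at hua hav
  exact (hblock _).mpr ⟨Fin.le_def.mpr (by omega), Fin.le_def.mpr (by omega)⟩

theorem apply_add_eq (hσ : IsBlockReversal n I σ) (hab : ParabolicRel n I a b) :
    (σ a : ℕ) + a = σ b + b := by
  obtain ⟨u, v, ha, hsa⟩ := hσ a
  obtain ⟨u', v', hb, hsb⟩ := hσ b
  obtain ⟨hua, hav⟩ := (ha a).mp (.refl a)
  obtain ⟨hub, hbv⟩ := (hb b).mp (.refl b)
  have h₁ := (hb u).mp (hab.symm.trans ((ha u).mpr ⟨le_rfl, hua.trans hav⟩))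
  have h₂ := (hb v).mp (hab.symm.trans ((ha v).mpr ⟨hua.trans hav, le_rfl⟩))
  have h₃ := (ha u').mp (hab.trans ((hb u').mpr ⟨le_rfl, hub.trans hbv⟩))
  have h₄ := (ha v').mp (hab.trans ((hb v').mpr ⟨hub.trans hbv, le_rfl⟩))
  simp only [Fin.le_def] at h₁ h₂ h₃ h₄
  omega

theorem apply_apply (hσ : IsBlockReversal n I σ) (a : Fin n) : σ (σ a) = a := by
  have := hσ.apply_add_eq (hσ.parabolicRel_apply a)
  exact Fin.ext (by omega)

theorem inv_eq (hσ : IsBlockReversal n I σ) : σ⁻¹ = σ :=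
  Equiv.ext fun a => Equiv.Perm.inv_eq_iff_eq.mpr (hσ.apply_apply a).symm

theorem apply_lt_apply_of_parabolicRel (hσ : IsBlockReversal n I σ) (hab : a < b)
    (hrel : ParabolicRel n I a b) : σ b < σ a := by
  have := hσ.apply_add_eq hrel
  rw [Fin.lt_def] at hab ⊢
  omega

theorem apply_lt_apply_of_not_parabolicRel (hσ : IsBlockReversal n I σ) (hab : a < b)
    (hrel : ¬ ParabolicRel n I a b) : σ a < σ b := by
  obtain ⟨k, hk, hak, hkb⟩ := ParabolicRel.exists_notMem_of_not_rel hab hrel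
  have ha := (hσ.parabolicRel_apply a).le_iff_le_of_notMem hk
  have hb := (hσ.parabolicRel_apply b).le_iff_le_of_notMem hk
  rw [Fin.lt_def]
  omega

theorem forall_apply_lt_iff {α : Type*} [Preorder α] (hσ : IsBlockReversal n I σ)
    (f : Fin n → α) :
    (∀ a b : Fin n, a < b → ParabolicRel n I a b → f (σ a) < f (σ b)) ↔
      ∀ a b : Fin n, a < b → ParabolicRel n I a b → f b < f a := by
  have hrel {a b : Fin n} (hab : ParabolicRel n I a b) : ParabolicRel n I (σ b) (σ a) :=
    (hσ.parabolicRel_apply b).symm.trans (hab.symm.trans (hσ.parabolicRel_apply a))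
  refine ⟨fun hf a b hab hab' => ?_, fun hf a b hab hab' =>
    hf _ _ (hσ.apply_lt_apply_of_parabolicRel hab hab') (hrel hab')⟩
  simpa only [hσ.apply_apply] using
    hf _ _ (hσ.apply_lt_apply_of_parabolicRel hab hab') (hrel hab')

end IsBlockReversal

theorem Monotone.lt_iff_lt_of_strictMono_fibers {α β γ : Type*} [LinearOrder α]
    [PartialOrder β] [Preorder γ] {h : α → β} (hmono : Monotone h) {w : α → γ}
    (hw : ∀ a b, a < b → h a = h b → w a < w b) {p q : α} (hqp : w q < w p) :
    h p < h q ↔ p < q := by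
  refine ⟨hmono.reflect_lt, fun hpq => (hmono hpq.le).lt_of_ne fun heq => ?_⟩
  exact lt_asymm hqp (hw p q hpq heq)

theorem stmt1_general (n : ℕ) (I : Set ℕ)
    (h : Fin n → ℤ) (hmono : Monotone h)
    (wQ0 : Equiv.Perm (Fin n))
    (hwQ0 : ∀ a : Fin n, ∃ u v : Fin n,
      (∀ b : Fin n, ParabolicRel n I a b ↔ (u ≤ b ∧ b ≤ v)) ∧
      ((wQ0 a : ℕ) + (a : ℕ) = (u : ℕ) + (v : ℕ)))
    (w : Equiv.Perm (Fin n))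
    (hwP : ∀ a b : Fin n, a < b → h a = h b → w a < w b) :
    (∀ i j : Fin n, (i : ℕ) ∈ I → (j : ℕ) = (i : ℕ) + 1 → h (w⁻¹ j) < h (w⁻¹ i)) ↔
      ((∀ a b : Fin n, a < b → h a = h b → (wQ0 * w) a < (wQ0 * w) b) ∧
       (∀ a b : Fin n, a < b → ParabolicRel n I a b → (wQ0 * w)⁻¹ a < (wQ0 * w)⁻¹ b)) := by
  have hσ : IsBlockReversal n I wQ0 := hwQ0
  have hdom : (∀ i j : Fin n, (i : ℕ) ∈ I → (j : ℕ) = (i : ℕ) + 1 → h (w⁻¹ j) < h (w⁻¹ i)) ↔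
      ∀ a b : Fin n, a < b → ParabolicRel n I a b → w⁻¹ b < w⁻¹ a := by
    rw [ParabolicRel.forall_succ_lt_iff fun i => h (w⁻¹ i)]
    refine forall₄_congr fun a b hab _ => hmono.lt_iff_lt_of_strictMono_fibers hwP ?_
    simpa only [Equiv.Perm.coe_inv, Equiv.apply_symm_apply] using hab
  rw [mul_inv_rev, hσ.inv_eq]
  simp only [Equiv.Perm.mul_apply]
  rw [hσ.forall_apply_lt_iff, ← hdom]
  refine ⟨fun hQ => ⟨fun a b hab heq => ?_, hQ⟩, And.right⟩
  refine hσ.apply_lt_apply_of_not_parabolicRel (hwP a b hab heq) fun hrel => ?_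
  have := (ParabolicRel.forall_succ_lt_iff _).mp hQ _ _ (hwP a b hab heq) hrel
  simp only [Equiv.Perm.coe_inv, Equiv.symm_apply_apply, heq, lt_irrefl] at this

/-- Wu, Theorem `theoremvarietyweight` in type A (combinatorial form): for a nondecreasing
`h : {1,…,n} → ℤ` with stabilizer `W_P`, a subset `I_Q` with block-reversal involution
`w_{Q,0}`, and `w ∈ W^P` (increasing on the `P`-blocks, i.e. the level sets of `h`), the
coweight `w(h) = h ∘ w⁻¹` is strictly `Q`-dominant if and only if `w₁ = w_{Q,0} ∘ w`
satisfies `w₁ ∈ W^P ∩ ^QW`. -/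
theorem stmt1 (n : ℕ) (I : Set ℕ) (hI : ∀ i ∈ I, i + 1 < n)
    (h : Fin n → ℤ) (hmono : Monotone h)
    (wQ0 : Equiv.Perm (Fin n))
    (hwQ0 : ∀ a : Fin n, ∃ u v : Fin n,
      (∀ b : Fin n, ParabolicRel n I a b ↔ (u ≤ b ∧ b ≤ v)) ∧
      ((wQ0 a : ℕ) + (a : ℕ) = (u : ℕ) + (v : ℕ)))
    (w : Equiv.Perm (Fin n))
    (hwP : ∀ a b : Fin n, a < b → h a = h b → w a < w b) :
    (∀ i j : Fin n, (i : ℕ) ∈ I → (j : ℕ) = (i : ℕ) + 1 → h (w⁻¹ j) < h (w⁻¹ i)) ↔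
      ((∀ a b : Fin n, a < b → h a = h b → (wQ0 * w) a < (wQ0 * w) b) ∧
       (∀ a b : Fin n, a < b → ParabolicRel n I a b → (wQ0 * w)⁻¹ a < (wQ0 * w)⁻¹ b)) :=
  stmt1_general n I h hmono wQ0 hwQ0 w hwP
end

section
/- Let ≈_P and ≈_Q be two interval ('standard parabolic') equivalence relations on {1,…,n} (each equivalence class an integer interval), with Q-block reversal involution w_{Q,0}. Let w ∈ S_n be such that w is increasing on the P-blocks and w⁻¹ is increasing on the Q-blocks (i.e. w ∈ W^P ∩ ^QW is the minimal-length representative of its double coset W_Q w W_P). Then the following are equivalent: (b) for all a ≠ b with a ≈_P b, one does not have w(a) ≈_Q w(b); (c) the permutation w_{Q,0}∘w is increasing on the P-blocks (i.e. w_{Q,0}w ∈ W^P). This is, in type A, the combinatorial content of the equivalence Ad(ẇ)m_P ∩ u ⊆ n_Q ⟺ w_{Q,0}w ∈ W^P from the proposition on generalized Steinberg varieties. -/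
lemma ParabolicRel.symm' {n : ℕ} {I : Set ℕ} {a b : Fin n} (h : ParabolicRel n I a b) :
    ParabolicRel n I b a := Relation.EqvGen.symm _ _ h

lemma ParabolicRel.trans' {n : ℕ} {I : Set ℕ} {a b c : Fin n} (h : ParabolicRel n I a b)
    (h' : ParabolicRel n I b c) : ParabolicRel n I a c := Relation.EqvGen.trans _ _ _ h h'

/-- Wu, Proposition `propositionsteinbergvarieties` (3), (b) ⟺ (c), in type A
(combinatorial form): for interval equivalence relations `≈_P`, `≈_Q` on `{1,…,n}` with
`Q`-block reversal `w_{Q,0}`, and `w ∈ W^P ∩ ^QW` (increasing on `P`-blocks, with inverse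
increasing on `Q`-blocks), one has: `w` maps no two distinct `P`-equivalent elements to
`Q`-equivalent elements if and only if `w_{Q,0} ∘ w` is increasing on the `P`-blocks. -/
theorem stmt2 (n : ℕ) (IP IQ : Set ℕ)
    (hIP : ∀ i ∈ IP, i + 1 < n) (hIQ : ∀ i ∈ IQ, i + 1 < n)
    (wQ0 : Equiv.Perm (Fin n))
    (hwQ0 : ∀ a : Fin n, ∃ u v : Fin n,
      (∀ b : Fin n, ParabolicRel n IQ a b ↔ (u ≤ b ∧ b ≤ v)) ∧
      ((wQ0 a : ℕ) + (a : ℕ) = (u : ℕ) + (v : ℕ)))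
    (w : Equiv.Perm (Fin n))
    (hwP : ∀ a b : Fin n, a < b → ParabolicRel n IP a b → w a < w b)
    (hwQ : ∀ a b : Fin n, a < b → ParabolicRel n IQ a b → w⁻¹ a < w⁻¹ b) :
    (∀ a b : Fin n, a ≠ b → ParabolicRel n IP a b → ¬ ParabolicRel n IQ (w a) (w b)) ↔
      (∀ a b : Fin n, a < b → ParabolicRel n IP a b → (wQ0 * w) a < (wQ0 * w) b) := by
  constructor
  · intro hb a b hab hP
    have hw : w a < w b := hwP a b hab hP
    obtain ⟨u1, v1, hB1, hs1⟩ := hwQ0 (w a)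
    obtain ⟨u2, v2, hB2, hs2⟩ := hwQ0 (w b)
    have hne : ¬ ParabolicRel n IQ (w a) (w b) := hb a b (ne_of_lt hab) hP
    have h1 : u1 ≤ w a ∧ w a ≤ v1 := (hB1 (w a)).1 (Relation.EqvGen.refl _)
    have h2 : u2 ≤ w b ∧ w b ≤ v2 := (hB2 (w b)).1 (Relation.EqvGen.refl _)
    have hv1u2 : (v1 : ℕ) < (u2 : ℕ) := by
      by_contra hle
      push_neg at hle
      apply hne
      have hav1 : ParabolicRel n IQ (w a) v1 := (hB1 v1).2 ⟨le_trans h1.1 h1.2, le_refl v1⟩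
      -- v1 < w b
      have hv1wb : (v1 : ℕ) < (w b : ℕ) := by
        by_contra hge
        push_neg at hge
        exact hne ((hB1 (w b)).2 ⟨le_trans h1.1 (le_of_lt hw), Fin.le_def.2 hge⟩)
      have hbv1 : ParabolicRel n IQ (w b) v1 :=
        (hB2 v1).2 ⟨Fin.le_def.2 hle, le_trans (Fin.le_def.2 (le_of_lt hv1wb)) h2.2⟩
      exact hav1.trans' hbv1.symm'
    have hle1 : (wQ0 (w a) : ℕ) ≤ (v1 : ℕ) := by
      have := Fin.le_def.1 h1.1; omega
    have hle2 : (u2 : ℕ) ≤ (wQ0 (w b) : ℕ) := by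
      have := Fin.le_def.1 h2.2; omega
    simp only [Equiv.Perm.mul_apply]
    exact Fin.lt_def.2 (by omega)
  · intro hc a b hab hP hQ
    have key : ∀ a b : Fin n, a < b → ParabolicRel n IP a b →
        ¬ ParabolicRel n IQ (w a) (w b) := by
      intro a b h hP hQ
      have hw : (w a : ℕ) < (w b : ℕ) := Fin.lt_def.1 (hwP a b h hP)
      have hc' : (wQ0 (w a) : ℕ) < (wQ0 (w b) : ℕ) := by
        have := hc a b h hP
        simp only [Equiv.Perm.mul_apply] at this
        exact Fin.lt_def.1 this
      obtain ⟨u, v, hB, hs⟩ := hwQ0 (w a)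
      obtain ⟨u', v', hB', hs'⟩ := hwQ0 (w b)
      have h1 : u ≤ w a ∧ w a ≤ v := (hB (w a)).1 (Relation.EqvGen.refl _)
      have h2 : u' ≤ w b ∧ w b ≤ v' := (hB' (w b)).1 (Relation.EqvGen.refl _)
      -- blocks coincide
      have hau : ParabolicRel n IQ (w a) u := (hB u).2 ⟨le_refl u, le_trans h1.1 h1.2⟩
      have hav : ParabolicRel n IQ (w a) v := (hB v).2 ⟨le_trans h1.1 h1.2, le_refl v⟩
      have hbu' : ParabolicRel n IQ (w b) u' := (hB' u').2 ⟨le_refl u', le_trans h2.1 h2.2⟩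
      have hbv' : ParabolicRel n IQ (w b) v' := (hB' v').2 ⟨le_trans h2.1 h2.2, le_refl v'⟩
      have hu1 : u' ≤ u := ((hB' u).1 (hQ.symm'.trans' hau)).1
      have hu2 : u ≤ u' := ((hB u').1 (hQ.trans' hbu')).1
      have hv1 : v ≤ v' := ((hB' v).1 (hQ.symm'.trans' hav)).2
      have hv2 : v' ≤ v := ((hB v').1 (hQ.trans' hbv')).2
      have hueq : (u : ℕ) = (u' : ℕ) := le_antisymm (Fin.le_def.1 hu2) (Fin.le_def.1 hu1)
      have hveq : (v : ℕ) = (v' : ℕ) := le_antisymm (Fin.le_def.1 hv1) (Fin.le_def.1 hv2)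
      omega
    rcases hab.lt_or_gt with h | h
    · exact key a b h hP hQ
    · exact key b a h hP.symm' hQ.symm'
end

section
/- Let g be an overconvergent analytic function on ℤ_p with values in L: there exist b_n ∈ L and a real number ρ > 1 with ‖b_n‖·ρ^n → 0, such that g(x) = Σ_{n≥0} b_n x^n for all x ∈ ℤ_p. Then there exists a constant C such that for every integer h > C and every f ∈ C^{(h)}(ℤ_p, L), the product g·f again lies in C^{(h)}(ℤ_p, L); that is, the Mahler coefficients c_n = (Δ^n (g·f))(0) of g·f satisfy v(c_n) − r_h·n → +∞. -/
/-!
Expanding `g = ∑ b_m x^m`, the `n`-th Mahler coefficient of `g * f` is `∑_m b_m Δ^n (x^m f)(0)`.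
The rule `Δ (x G) = x ΔG + G(· + 1)`, the ultrametric inequality and the density of `ℕ` in `ℤ_p`
give `‖Δ^n (x^m f)(0)‖ ≤ sup_{i ≥ n - m} ‖a_i‖`. Hence, with `q = p^{r_h}`,
`‖c_n‖ q^n ≤ sup_{m + i ≥ n} (‖b_m‖ q^m) (‖a_i‖ q^i)`, which tends to `0` as soon as `q ≤ ρ`.
Since `r_h ≤ 1 / h`, this holds once `h > log p / log ρ`.
-/

open Filter fwdDiff Topology

section FwdDiff

variable {M R : Type*} [AddCommMonoid M] (h : M)

lemma fwdDiff_iter_succ_apply {G : Type*} [AddCommGroup G] (f : M → G) (k : ℕ) (y : M) :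
    (Δ_[h])^[k] f (y + h) = (Δ_[h])^[k] f y + (Δ_[h])^[k + 1] f y := by
  rw [Function.iterate_succ_apply', fwdDiff, add_sub_cancel]

lemma HasSum.fwdDiff_iter {ι G : Type*} [AddCommGroup G] [TopologicalSpace G]
    [IsTopologicalAddGroup G] {F : ι → M → G} {f : M → G}
    (hF : ∀ x, HasSum (fun i => F i x) (f x)) (n : ℕ) (y : M) :
    HasSum (fun i => (Δ_[h])^[n] (F i) y) ((Δ_[h])^[n] f y) := by
  induction n generalizing y with
  | zero => exact hF y
  | succ n ih =>
    simp only [Function.iterate_succ_apply']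
    exact (ih (y + h)).sub (ih y)

lemma continuous_fwdDiff_iter {G : Type*} [TopologicalSpace M] [ContinuousAdd M]
    [TopologicalSpace G] [AddCommGroup G] [IsTopologicalAddGroup G] {f : M → G} (hf : Continuous f) (k : ℕ) : Continuous ((Δ_[h])^[k] f) := by
  induction k with
  | zero => exact hf
  | succ k ih =>
    rw [Function.iterate_succ']
    exact (ih.comp (continuous_add_const h)).sub ih

section Ring

variable [Ring R] {φ : M → R}

lemma fwdDiff_mul_of_add_eq_add_one (hφ : ∀ x, φ (x + h) = φ x + 1) (G : M → R) :
    Δ_[h] (fun x => φ x * G x) = fun x => φ x * Δ_[h] G x + G (x + h) := by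
  funext x
  simp only [fwdDiff, hφ]
  noncomm_ring

lemma fwdDiff_iter_succ_mul_of_add_eq_add_one (hφ : ∀ x, φ (x + h) = φ x + 1) (k : ℕ)
    (G : M → R) (y : M) :
    (Δ_[h])^[k + 1] (fun x => φ x * G x) y
      = φ y * (Δ_[h])^[k + 1] G y + (k + 1) • (Δ_[h])^[k] G (y + h) := by
  induction k generalizing G with
  | zero => simp [fwdDiff_mul_of_add_eq_add_one h hφ]
  | succ k ih =>
    rw [Function.iterate_succ_apply, fwdDiff_mul_of_add_eq_add_one h hφ, ← Pi.add_def,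
      fwdDiff_iter_add, Pi.add_apply, ih, fwdDiff_iter_comp_add,
      ← Function.iterate_succ_apply, ← Function.iterate_succ_apply, succ_nsmul _ (k + 1)]
    abel

end Ring

lemma norm_fwdDiff_iter_pow_mul_le [SeminormedRing R] [IsUltrametricDist R] {φ : M → R}
    (hφ : ∀ x, φ (x + h) = φ x + 1) (hφ_le : ∀ x, ‖φ x‖ ≤ 1) {G : M → R} {B : ℝ} (m k : ℕ)
    (hG : ∀ i, k - m ≤ i → ∀ z, ‖(Δ_[h])^[i] G z‖ ≤ B) (y : M) :
    ‖(Δ_[h])^[k] (fun x => φ x ^ m * G x) y‖ ≤ B := by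
  induction m generalizing k y with
  | zero => simpa using hG k le_rfl y
  | succ m ih =>
    have hmul : ∀ z, ‖φ z * (Δ_[h])^[k] (fun x => φ x ^ m * G x) z‖ ≤ B := fun z =>
      (norm_mul_le _ _).trans <| (mul_le_of_le_one_left (norm_nonneg _) (hφ_le z)).trans <|
        ih k (fun i hi => hG i (by omega)) z
    simp only [pow_succ', mul_assoc]
    cases k with
    | zero => exact hmul y
    | succ k =>
      rw [fwdDiff_iter_succ_mul_of_add_eq_add_one h hφ]
      exact (IsUltrametricDist.norm_add_le_max _ _).trans <| max_le (hmul y) <|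
        (IsUltrametricDist.norm_nsmul_le _ _).trans (ih k (fun i hi => hG i (by omega)) _)

end FwdDiff

section PadicInt

variable {p : ℕ} [Fact p.Prime]

lemma norm_fwdDiff_iter_le_of_norm_fwdDiff_iter_zero_le {E : Type*} [SeminormedAddCommGroup E]
    [IsUltrametricDist E] {f : ℤ_[p] → E} (hf : Continuous f) {j : ℕ} {B : ℝ}
    (hB : ∀ k, j ≤ k → ‖(Δ_[1])^[k] f 0‖ ≤ B) (k : ℕ) (hk : j ≤ k) (y : ℤ_[p]) :
    ‖(Δ_[1])^[k] f y‖ ≤ B := by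
  have hnat : ∀ n : ℕ, ∀ k, j ≤ k → ‖(Δ_[1])^[k] f (n : ℤ_[p])‖ ≤ B := by
    intro n
    induction n with
    | zero => simpa using hB
    | succ n ih =>
      intro k hk
      rw [Nat.cast_succ, fwdDiff_iter_succ_apply]
      exact (IsUltrametricDist.norm_add_le_max _ _).trans (max_le (ih k hk) (ih (k + 1) (by omega)))
  have hclosed : IsClosed {y : ℤ_[p] | ‖(Δ_[1])^[k] f y‖ ≤ B} :=
    isClosed_le (continuous_fwdDiff_iter 1 hf k).norm continuous_const
  exact closure_minimal (by rintro _ ⟨n, rfl⟩; exact hnat n k hk) hclosed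
    (PadicInt.denseRange_natCast y)

variable {L : Type*} [NontriviallyNormedField L] [NormedAlgebra ℚ_[p] L]

lemma norm_algebraMap_padicInt_le_one (x : ℤ_[p]) : ‖algebraMap ℚ_[p] L x‖ ≤ 1 := by
  rw [norm_algebraMap']
  exact x.norm_le_one

lemma norm_fwdDiff_iter_mul_algebraMap_pow_mul_zero_le [IsUltrametricDist L] {G : ℤ_[p] → L}
    (hG : Continuous G) (c : L) {n m : ℕ} {B : ℝ}
    (hB : ∀ i, n - m ≤ i → ‖c‖ * ‖(Δ_[1])^[i] G 0‖ ≤ B) :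
    ‖(Δ_[1])^[n] (fun x : ℤ_[p] => c * algebraMap ℚ_[p] L x ^ m * G x) 0‖ ≤ B := by
  have hcG : ∀ i, n - m ≤ i → ‖(Δ_[1])^[i] (c • G) 0‖ ≤ B := fun i hi => by
    simpa only [fwdDiff_iter_const_smul, Pi.smul_apply, norm_smul] using hB i hi
  simpa only [Pi.smul_apply, smul_eq_mul, mul_left_comm c, mul_assoc] using
    norm_fwdDiff_iter_pow_mul_le 1 (fun x => by simp) norm_algebraMap_padicInt_le_one m n
      (norm_fwdDiff_iter_le_of_norm_fwdDiff_iter_zero_le (hG.const_smul c) hcG) 0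

end PadicInt

lemma eventually_mul_le_of_add_ge {u w : ℕ → ℝ} (hu : Tendsto u atTop (𝓝 0))
    (hw : Tendsto w atTop (𝓝 0)) {ε : ℝ} (hε : 0 < ε) :
    ∀ᶠ n in atTop, ∀ m i, n ≤ m + i → w m * u i ≤ ε := by
  obtain ⟨U, hU⟩ := hu.abs.bddAbove_range
  obtain ⟨W, hW⟩ := hw.abs.bddAbove_range
  have hU1 : 0 < max U 1 := by positivity
  have hW1 : 0 < max W 1 := by positivity
  obtain ⟨N, hN⟩ := eventually_atTop.1 <|
    (tendsto_zero_iff_abs_tendsto_zero u).1 hu |>.eventually (ge_mem_nhds (div_pos hε hW1))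
  obtain ⟨M, hM⟩ := eventually_atTop.1 <|
    (tendsto_zero_iff_abs_tendsto_zero w).1 hw |>.eventually (ge_mem_nhds (div_pos hε hU1))
  filter_upwards [eventually_ge_atTop (N + M)] with n hn m i hmi
  refine (le_abs_self _).trans ?_
  rw [abs_mul]
  rcases le_or_gt M m with hm | hm
  · calc |w m| * |u i| ≤ ε / max U 1 * max U 1 := by
          gcongr
          · exact hM m hm
          · exact (hU ⟨i, rfl⟩).trans (le_max_left _ _)
      _ = ε := div_mul_cancel₀ _ hU1.ne'
  · calc |w m| * |u i| ≤ max W 1 * (ε / max W 1) := by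
          gcongr
          · exact (hW ⟨m, rfl⟩).trans (le_max_left _ _)
          · exact hN i (by omega)
      _ = ε := mul_div_cancel₀ _ hW1.ne'

theorem tendsto_norm_fwdDiff_iter_mul_mul_pow {p : ℕ} [Fact p.Prime] {L : Type*}
    [NontriviallyNormedField L] [NormedAlgebra ℚ_[p] L] [IsUltrametricDist L]
    {g : ℤ_[p] → L} {b : ℕ → L}
    (hg : ∀ x : ℤ_[p], HasSum (fun n : ℕ => b n * algebraMap ℚ_[p] L x ^ n) (g x))
    {f : ℤ_[p] → L} (hf : Continuous f) {q : ℝ} (hq : 1 ≤ q)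
    (hb : Tendsto (fun n : ℕ => ‖b n‖ * q ^ n) atTop (𝓝 0))
    (ha : Tendsto (fun n : ℕ => ‖(Δ_[1])^[n] f 0‖ * q ^ n) atTop (𝓝 0)) :
    Tendsto (fun n : ℕ => ‖(Δ_[1])^[n] (fun x => g x * f x) 0‖ * q ^ n) atTop (𝓝 0) := by
  have hq0 : 0 < q := by linarith
  refine tendsto_order.2 ⟨fun ε hε => .of_forall fun n => hε.trans_le (by positivity),
    fun ε hε => ?_⟩
  filter_upwards [eventually_mul_le_of_add_ge ha hb (half_pos hε)] with n hn
  have hterm : ∀ m, ‖(Δ_[1])^[n] (fun x : ℤ_[p] => b m * algebraMap ℚ_[p] L x ^ m * f x) 0‖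
      ≤ ε / 2 / q ^ n := fun m =>
    norm_fwdDiff_iter_mul_algebraMap_pow_mul_zero_le hf (b m) fun i hi => by
      rw [le_div_iff₀ (pow_pos hq0 n)]
      calc ‖b m‖ * ‖(Δ_[1])^[i] f 0‖ * q ^ n ≤ ‖b m‖ * ‖(Δ_[1])^[i] f 0‖ * q ^ (m + i) :=
            mul_le_mul_of_nonneg_left (pow_le_pow_right₀ hq (by omega)) (by positivity)
        _ = ‖b m‖ * q ^ m * (‖(Δ_[1])^[i] f 0‖ * q ^ i) := by ring
        _ ≤ ε / 2 := hn m i (by omega)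
  have hsum := HasSum.fwdDiff_iter 1 (fun x => (hg x).mul_right (f x)) n 0
  rw [← lt_div_iff₀ (pow_pos hq0 n), ← hsum.tsum_eq]
  exact (IsUltrametricDist.norm_tsum_le_of_forall_le_of_nonneg (by positivity) hterm).trans_lt
    (div_lt_div_of_pos_right (half_lt_self hε) (pow_pos hq0 n))

lemma natCast_le_pow_pred_mul_sub_one {P : ℝ} (hP : 2 ≤ P) {h : ℕ} (hh : 1 ≤ h) :
    (h : ℝ) ≤ P ^ (h - 1) * (P - 1) :=
  calc (h : ℝ) ≤ 2 ^ (h - 1) := by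
        have := Nat.lt_two_pow_self (n := h - 1)
        exact_mod_cast (show h ≤ 2 ^ (h - 1) by omega)
    _ ≤ P ^ (h - 1) := pow_le_pow_left₀ zero_le_two hP _
    _ ≤ P ^ (h - 1) * (P - 1) := le_mul_of_one_le_right (by positivity) (by linarith)

lemma rpow_one_div_pow_pred_mul_sub_one_le {P ρ : ℝ} (hP : 2 ≤ P) (hρ : 1 < ρ) {h : ℕ}
    (hh : Real.log P / Real.log ρ < h) : P ^ (1 / (P ^ (h - 1) * (P - 1))) ≤ ρ := by
  have hlogρ : 0 < Real.log ρ := Real.log_pos hρ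
  have hh0 : (0 : ℝ) < h := (div_pos (Real.log_pos (by linarith)) hlogρ).trans hh
  have hP_lt : P < ρ ^ h := by
    rw [← Real.log_lt_log_iff (by positivity) (by positivity), Real.log_pow]
    rwa [div_lt_iff₀ hlogρ] at hh
  calc P ^ (1 / (P ^ (h - 1) * (P - 1))) ≤ P ^ (1 / (h : ℝ)) := by
        refine Real.rpow_le_rpow_of_exponent_le (by linarith) (one_div_le_one_div_of_le hh0 ?_)
        exact natCast_le_pow_pred_mul_sub_one hP (by exact_mod_cast hh0)
    _ ≤ ρ := by
        rw [one_div, Real.rpow_inv_le_iff_of_pos (by linarith) (by linarith) hh0, Real.rpow_natCast]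
        exact hP_lt.le

theorem stmt6_general (p : ℕ) [Fact p.Prime] (L : Type*) [NontriviallyNormedField L]
    [NormedAlgebra ℚ_[p] L] [IsUltrametricDist L]
    (g : ℤ_[p] → L) (b : ℕ → L) (ρ : ℝ) (hρ : 1 < ρ)
    (hb : Tendsto (fun n : ℕ => ‖b n‖ * ρ ^ n) atTop (nhds 0))
    (hg : ∀ x : ℤ_[p],
      HasSum (fun n : ℕ => b n * (algebraMap ℚ_[p] L (x : ℚ_[p])) ^ n) (g x)) :
    ∃ C : ℝ, ∀ h : ℕ, C < h →
      ∀ rh : ℝ, rh = 1 / ((p : ℝ) ^ (h - 1) * ((p : ℝ) - 1)) →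
        ∀ f : C(ℤ_[p], L),
          Tendsto (fun n : ℕ =>
              ‖(Δ_[(1 : ℤ_[p])])^[n] (⇑f) 0‖ * (p : ℝ) ^ (rh * n)) atTop (nhds 0) →
          Tendsto (fun n : ℕ =>
              ‖(Δ_[(1 : ℤ_[p])])^[n] (fun x : ℤ_[p] => g x * f x) 0‖ * (p : ℝ) ^ (rh * n))
            atTop (nhds 0) := by
  have hp : (2 : ℝ) ≤ p := by exact_mod_cast (Fact.out : p.Prime).two_le
  refine ⟨Real.log p / Real.log ρ, fun h hC rh hrh f hf => ?_⟩
  have hrh0 : 0 ≤ rh := hrh ▸ div_nonneg zero_le_one (mul_nonneg (by positivity) (by linarith))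
  have hq_le : (p : ℝ) ^ rh ≤ ρ := by rw [hrh]; exact rpow_one_div_pow_pred_mul_sub_one_le hp hρ hC
  have hpow : ∀ n : ℕ, (p : ℝ) ^ (rh * n) = ((p : ℝ) ^ rh) ^ n := fun n => by
    rw [Real.rpow_mul (by positivity), Real.rpow_natCast]
  simp only [hpow] at hf ⊢
  have hbq : Tendsto (fun n : ℕ => ‖b n‖ * ((p : ℝ) ^ rh) ^ n) atTop (𝓝 0) :=
    squeeze_zero (fun n => by positivity) (fun n => mul_le_mul_of_nonneg_left
      (pow_le_pow_left₀ (by positivity) hq_le n) (norm_nonneg _)) hb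
  exact tendsto_norm_fwdDiff_iter_mul_mul_pow hg f.continuous (Real.one_le_rpow (by linarith) hrh0)
    hbq hf

/-- Wu, Lemma `lemmahanalyticfunctions`: if `g` is an overconvergent analytic function on
`ℤ_p` with values in `L` (i.e. `g(x) = Σ b_n x^n` with `‖b_n‖·ρ^n → 0` for some `ρ > 1`),
then there is a constant `C` such that for every `h > C` and every
`f ∈ C^{(h)}(ℤ_p, L)` (continuous with Mahler coefficients `a_n = (Δ^n f)(0)` satisfying
`‖a_n‖·p^{r_h n} → 0`), the product `g·f` again lies in `C^{(h)}(ℤ_p, L)`, i.e. its Mahler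
coefficients `c_n = (Δ^n (g·f))(0)` satisfy `‖c_n‖·p^{r_h n} → 0`. -/
theorem stmt6 (p : ℕ) [Fact p.Prime] (L : Type*) [NontriviallyNormedField L]
    [NormedAlgebra ℚ_[p] L] [IsUltrametricDist L] [CompleteSpace L]
    (g : ℤ_[p] → L) (b : ℕ → L) (ρ : ℝ) (hρ : 1 < ρ)
    (hb : Tendsto (fun n : ℕ => ‖b n‖ * ρ ^ n) atTop (nhds 0))
    (hg : ∀ x : ℤ_[p],
      HasSum (fun n : ℕ => b n * (algebraMap ℚ_[p] L (x : ℚ_[p])) ^ n) (g x)) :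
    ∃ C : ℝ, ∀ h : ℕ, C < h →
      ∀ rh : ℝ, rh = 1 / ((p : ℝ) ^ (h - 1) * ((p : ℝ) - 1)) →
        ∀ f : C(ℤ_[p], L),
          Tendsto (fun n : ℕ =>
              ‖(Δ_[(1 : ℤ_[p])])^[n] (⇑f) 0‖ * (p : ℝ) ^ (rh * n)) atTop (nhds 0) →
          Tendsto (fun n : ℕ =>
              ‖(Δ_[(1 : ℤ_[p])])^[n] (fun x : ℤ_[p] => g x * f x) 0‖ * (p : ℝ) ^ (rh * n))
            atTop (nhds 0) :=
  stmt6_general p L g b ρ hρ hb hg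
end

section
/- Let h ≥ 1 be an integer and let f ∈ C^{(h)}(ℤ_p, L) have Mahler expansion f(x) = Σ_{n≥0} a_n·C(x,n). Then the function x ↦ x·f(x) again lies in C^{(h)}(ℤ_p, L); its Mahler expansion is x·f(x) = Σ_{n≥1} n·(a_n + a_{n−1})·C(x,n), and v^{(h)}(x·f) ≥ v^{(h)}(f) − r_h, where v^{(h)}(Σ_n a_n C(·,n)) := inf_n (v(a_n) − r_h·n). -/
open Filter fwdDiff

private lemma stmt7_key {p : ℕ} [Fact p.Prime] {L : Type*} [NontriviallyNormedField L]
    [NormedAlgebra ℚ_[p] L]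
    (f : C(ℤ_[p], L)) (g : ℤ_[p] → L)
    (hg : ∀ x : ℤ_[p], g x = algebraMap ℚ_[p] L (x : ℚ_[p]) * f x) (n : ℕ) :
    ∀ x : ℤ_[p], (Δ_[(1 : ℤ_[p])])^[n + 1] g x =
      algebraMap ℚ_[p] L (x : ℚ_[p]) * (Δ_[(1 : ℤ_[p])])^[n + 1] (⇑f) x
        + (n + 1) • (Δ_[(1 : ℤ_[p])])^[n] (⇑f) (x + 1) := by
  have e : ∀ (F : ℤ_[p] → L) (m : ℕ) (y : ℤ_[p]),
      (Δ_[(1 : ℤ_[p])])^[m + 1] F y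
        = (Δ_[(1 : ℤ_[p])])^[m] F (y + 1) - (Δ_[(1 : ℤ_[p])])^[m] F y := by
    intro F m y
    rw [Function.iterate_succ_apply']
    rfl
  induction n with
  | zero =>
    intro x
    simp only [zero_add, e, Function.iterate_zero, id_eq, hg, PadicInt.coe_add,
      PadicInt.coe_one, map_add, map_one, one_smul]
    ring
  | succ n ih =>
    intro x
    rw [e g (n + 1) x, ih (x + 1), ih x]
    simp only [e, hg, PadicInt.coe_add, PadicInt.coe_one, map_add, map_one, nsmul_eq_mul]
    push_cast
    ring

/-- Wu, first part of the proof of Lemma `lemmahanalyticfunctions`: multiplication by the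
coordinate `x` preserves the space `C^{(h)}(ℤ_p, L)` of continuous functions whose Mahler
coefficients `a_n = (Δ^n f)(0)` satisfy `v(a_n) - r_h·n → +∞` (equivalently
`‖a_n‖·p^{r_h n} → 0`); the Mahler coefficients of `x·f` are `c_n = n·(a_n + a_{n-1})`
(with `c_0 = 0`), and `v^{(h)}(x·f) ≥ v^{(h)}(f) - r_h`, i.e.
`‖c_n‖·p^{r_h n} ≤ p^{r_h} · sup_m ‖a_m‖·p^{r_h m}` for all `n`. -/
theorem stmt7 (p : ℕ) [Fact p.Prime] (L : Type*) [NontriviallyNormedField L]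
    [NormedAlgebra ℚ_[p] L] [IsUltrametricDist L] [CompleteSpace L]
    (h : ℕ) (hh : 1 ≤ h)
    (rh : ℝ) (hrh : rh = 1 / ((p : ℝ) ^ (h - 1) * ((p : ℝ) - 1)))
    (f : C(ℤ_[p], L))
    (a : ℕ → L) (ha : ∀ n : ℕ, a n = (Δ_[(1 : ℤ_[p])])^[n] (⇑f) 0)
    (hf : Tendsto (fun n : ℕ => ‖a n‖ * (p : ℝ) ^ (rh * n)) atTop (nhds 0))
    (g : ℤ_[p] → L) (hg : ∀ x : ℤ_[p], g x = algebraMap ℚ_[p] L (x : ℚ_[p]) * f x)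
    (c : ℕ → L) (hc : ∀ n : ℕ, c n = (Δ_[(1 : ℤ_[p])])^[n] g 0) :
    Continuous g ∧
    Tendsto (fun n : ℕ => ‖c n‖ * (p : ℝ) ^ (rh * n)) atTop (nhds 0) ∧
    c 0 = 0 ∧
    (∀ n : ℕ, c (n + 1) = (n + 1) • (a (n + 1) + a n)) ∧
    (∀ n : ℕ, ‖c n‖ * (p : ℝ) ^ (rh * n) ≤
      (p : ℝ) ^ rh * ⨆ m : ℕ, ‖a m‖ * (p : ℝ) ^ (rh * m)) := by
  have hp : (2 : ℝ) ≤ (p : ℝ) := by exact_mod_cast (Fact.out : p.Prime).two_le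
  have hp1 : (1 : ℝ) < (p : ℝ) := by linarith
  have hrh0 : 0 ≤ rh := by
    have h1 : (0 : ℝ) < (p : ℝ) - 1 := by linarith
    rw [hrh]
    positivity
  have hprh : (1 : ℝ) ≤ (p : ℝ) ^ rh :=
    Real.one_le_rpow hp1.le hrh0
  -- continuity
  have hcont : Continuous g := by
    have : g = fun x : ℤ_[p] => algebraMap ℚ_[p] L (x : ℚ_[p]) * f x := funext hg
    rw [this]
    exact ((continuous_algebraMap ℚ_[p] L).comp continuous_subtype_val).mul f.continuous
  -- c 0 = 0
  have hc0 : c 0 = 0 := by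
    rw [hc 0]
    simp [hg 0]
  -- c (n+1)
  have hcn : ∀ n : ℕ, c (n + 1) = (n + 1) • (a (n + 1) + a n) := by
    intro n
    rw [hc (n + 1), stmt7_key f g hg n 0]
    have h1 : (Δ_[(1 : ℤ_[p])])^[n] (⇑f) ((0 : ℤ_[p]) + 1)
        = a (n + 1) + a n := by
      rw [ha (n + 1), ha n, Function.iterate_succ_apply' _ n (⇑f), fwdDiff]
      abel
    rw [h1]
    simp
  -- norm bound on smul
  have hsmul : ∀ (n : ℕ) (y : L), ‖n • y‖ ≤ ‖y‖ := by
    intro n y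
    rw [nsmul_eq_mul]
    calc ‖(n : L) * y‖ = ‖(n : L)‖ * ‖y‖ := norm_mul _ _
      _ ≤ 1 * ‖y‖ := by
          gcongr
          exact IsUltrametricDist.norm_natCast_le_one L n
      _ = ‖y‖ := one_mul _
  -- pointwise bound: ‖c (n+1)‖ * p ^ (rh * (n+1)) ≤ p ^ rh * max (un (n+1)) (un n)
  set u : ℕ → ℝ := fun n => ‖a n‖ * (p : ℝ) ^ (rh * n) with hu
  have hun : ∀ n, 0 ≤ u n := fun n => by positivity
  have hbound : ∀ n : ℕ, ‖c (n + 1)‖ * (p : ℝ) ^ (rh * (n + 1 : ℕ))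
      ≤ (p : ℝ) ^ rh * max (u (n + 1)) (u n) := by
    intro n
    have h1 : ‖c (n + 1)‖ ≤ max ‖a (n + 1)‖ ‖a n‖ := by
      rw [hcn n]
      exact (hsmul _ _).trans (IsUltrametricDist.norm_add_le_max _ _)
    have hpos : (0 : ℝ) < (p : ℝ) ^ (rh * (n + 1 : ℕ)) := by positivity
    rcases le_total ‖a n‖ ‖a (n + 1)‖ with hle | hle
    · rw [max_eq_left hle] at h1
      calc ‖c (n + 1)‖ * (p : ℝ) ^ (rh * (n + 1 : ℕ))
          ≤ ‖a (n + 1)‖ * (p : ℝ) ^ (rh * (n + 1 : ℕ)) := by gcongr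
        _ = u (n + 1) := rfl
        _ ≤ (p : ℝ) ^ rh * max (u (n + 1)) (u n) := by
            nlinarith [le_max_left (u (n + 1)) (u n), hun (n + 1), hun n,
              le_max_right (u (n + 1)) (u n)]
    · rw [max_eq_right hle] at h1
      calc ‖c (n + 1)‖ * (p : ℝ) ^ (rh * (n + 1 : ℕ))
          ≤ ‖a n‖ * (p : ℝ) ^ (rh * (n + 1 : ℕ)) := by gcongr
        _ = (p : ℝ) ^ rh * u n := by
            rw [hu]
            push_cast
            rw [mul_add, mul_one, Real.rpow_add (by linarith)]
            ring
        _ ≤ (p : ℝ) ^ rh * max (u (n + 1)) (u n) := by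
            have := le_max_right (u (n + 1)) (u n)
            nlinarith
  -- the full pointwise bound for all n including 0
  have hbound' : ∀ n : ℕ, ‖c n‖ * (p : ℝ) ^ (rh * n)
      ≤ (p : ℝ) ^ rh * max (u n) (u (n - 1)) := by
    intro n
    match n with
    | 0 =>
      rw [hc0]
      simp only [norm_zero, zero_mul]
      positivity
    | (n + 1) =>
      simpa using hbound n
  -- tendsto
  have htend : Tendsto (fun n : ℕ => ‖c n‖ * (p : ℝ) ^ (rh * n)) atTop (nhds 0) := by
    have hb : Tendsto (fun n : ℕ => (p : ℝ) ^ rh * max (u n) (u (n - 1)))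
        atTop (nhds 0) := by
      have h2 : Tendsto (fun n : ℕ => u (n - 1)) atTop (nhds 0) :=
        hf.comp (tendsto_sub_atTop_nat 1)
      have := (hf.max h2).const_mul ((p : ℝ) ^ rh)
      simpa using this
    refine squeeze_zero (fun n => by positivity) hbound' hb
  -- sup bound
  have hBdd : BddAbove (Set.range u) := by
    obtain ⟨N, hN⟩ := (Metric.tendsto_atTop.mp hf 1 one_pos)
    refine ⟨max 1 (Finset.sup' (Finset.range (N + 1)) ⟨0, by simp⟩ u), ?_⟩
    rintro x ⟨n, rfl⟩
    rcases le_or_gt n N with hn | hn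
    · exact le_max_of_le_right (Finset.le_sup' u (by simp [Nat.lt_succ_iff, hn]))
    · have := hN n hn.le
      rw [Real.dist_eq, sub_zero, abs_of_nonneg (hun n)] at this
      exact le_max_of_le_left this.le
  have hsup : ∀ n : ℕ, u n ≤ ⨆ m : ℕ, u m := fun n => le_ciSup hBdd n
  have hsup0 : 0 ≤ ⨆ m : ℕ, u m := (hun 0).trans (hsup 0)
  refine ⟨hcont, htend, hc0, hcn, fun n => ?_⟩
  calc ‖c n‖ * (p : ℝ) ^ (rh * n) ≤ (p : ℝ) ^ rh * max (u n) (u (n - 1)) := hbound' n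
    _ ≤ (p : ℝ) ^ rh * ⨆ m : ℕ, u m := by
        gcongr
        exact max_le (hsup n) (hsup _)
end

section
/- Let k be a field of characteristic zero, W a k-vector space, γ a k-linear automorphism of W, and c ∈ k a nonzero element. Extend γ to a k-linear automorphism of the polynomial module W[X] = ⊕_{j≥0} W·X^j by γ(w·X^j) = γ(w)·(X + c)^j. Then the constant-term map Σ_j a_j X^j ↦ a_0 restricts to a k-linear bijection from the fixed space {v ∈ W[X] : γ(v) = v} onto the subspace W^{(γ−1)-nil} := {a ∈ W : (γ−1)^N a = 0 for some N ≥ 1}; its inverse sends a ∈ W^{(γ−1)-nil} to Σ_{j≥0} ((−1)^j / j!)·∇^j(a)·X^j, where ∇ := (1/c)·log γ = (1/c)·Σ_{i≥1} (−1)^{i+1}(γ−1)^i/i (a finite sum on each (γ−1)-nilpotent vector). Moreover, under this bijection, the k-linear derivation ν of W[X] given by ν(w·X^j) = −j·w·X^{j−1} corresponds to the operator ∇ on W^{(γ−1)-nil}. -/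
/-!
Write `u = γ - 1` and `∇ = c⁻¹ log(1 + u)`. In characteristic zero, `exp(-log(1 + X)) (1 + X) ≡ 1`
modulo `X^r` (the derivative of the difference is divisible by `X^(r-1)`), so `exp(-c∇) γ = 1` on
vectors killed by `u^r`. By the binomial theorem this says exactly that `Σ_j (-X)^j ∇^j a / j!` is
fixed by `G`, which gives surjectivity onto the `u`-nilpotent vectors. For injectivity, `G^n v = v`
read at `X = 0` says that the `W`-valued polynomial `v` vanishes at all the points `n c`, so `v = 0`
once `v 0 = 0`. Finally the derivation `ν` commutes with `G`, and reading off the coefficient of `X`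
of the fixed vector `Σ_j (-X)^j ∇^j a / j!` gives `(ν v) 0 = ∇ (v 0)`.
-/

/-- The truncated logarithm `∇ = (1/c)·log γ = (1/c)·Σ_{i=1}^{N} (-1)^{i+1}(γ-1)^i/i`,
which on every vector killed by `(γ-1)^N` agrees with the full series. -/
noncomputable def nablaOf {k W : Type*} [Field k] [AddCommGroup W] [Module k W]
    (γ : W ≃ₗ[k] W) (c : k) (N : ℕ) : W →ₗ[k] W :=
  c⁻¹ • ∑ i ∈ Finset.Icc 1 N,
    ((-1 : k) ^ (i + 1) / (i : k)) • ((γ.toLinearMap - LinearMap.id) ^ i)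

open Finset Polynomial
open scoped Nat

namespace UnipotentLog

theorem sum_choose_mul_pow_mul_choose_mul_pow {R : Type*} [CommRing R] (x y : R) (l i : ℕ) :
    ∑ j ∈ range (l + 1), (l.choose j : R) * y ^ (l - j) * ((j.choose i : R) * x ^ (j - i)) =
      (l.choose i : R) * (x + y) ^ (l - i) := by
  have h := congrArg (coeff · i) (add_pow (X + C x) (C y) l)
  simp only [add_assoc, ← C_add, coeff_X_add_C_pow, finsetSum_coeff, ← C_pow, coeff_mul_natCast,
    coeff_mul_C] at h
  rw [mul_comm, h]
  exact sum_congr rfl fun j _ => by ring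

variable {k : Type*} [Field k]

noncomputable def logPoly (N : ℕ) : k[X] :=
  ∑ i ∈ Icc 1 N, ((-1 : k) ^ (i + 1) / i) • X ^ i

noncomputable def expTrunc (r : ℕ) (p : k[X]) : k[X] :=
  ∑ m ∈ range r, ((m ! : k)⁻¹) • p ^ m

theorem X_dvd_logPoly (N : ℕ) : (X : k[X]) ∣ logPoly N :=
  dvd_sum fun i hi => dvd_smul_of_dvd _ (dvd_pow_self X (by grind))

theorem derivative_logPoly_mul_one_add_X [CharZero k] (N : ℕ) :
    derivative (logPoly N : k[X]) * (1 + X) = 1 - (-X) ^ N := by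
  have hgeom : derivative (logPoly N : k[X]) = ∑ t ∈ range N, (-X) ^ t := by
    rw [logPoly, map_sum, ← Ico_add_one_right_eq_Icc, sum_Ico_eq_sum_range, Nat.add_sub_cancel]
    refine sum_congr rfl fun t _ => ?_
    have ht : ((1 + t : ℕ) : k) ≠ 0 := by exact_mod_cast (by omega : 1 + t ≠ 0)
    rw [derivative_smul, derivative_X_pow, smul_eq_C_mul, ← mul_assoc, ← C_mul,
      Nat.add_sub_cancel_left, div_mul_cancel₀ _ ht, neg_pow (X : k[X]), pow_add, pow_add]
    simp
  have := geom_sum_mul (-X : k[X]) N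
  rw [← hgeom] at this
  linear_combination (-1 : k[X]) * this

theorem derivative_expTrunc_succ [CharZero k] (r : ℕ) (p : k[X]) :
    derivative (expTrunc (r + 1) p) = derivative p * expTrunc r p := by
  rw [expTrunc, sum_range_succ', map_add, map_sum, expTrunc, mul_sum]
  refine (add_eq_left.mpr (by simp)).trans (sum_congr rfl fun m _ => ?_)
  rw [derivative_smul, derivative_pow, Nat.add_sub_cancel, smul_eq_C_mul, smul_eq_C_mul]
  have hm : ((m + 1) ! : k)⁻¹ * (m + 1 : ℕ) = (m ! : k)⁻¹ := by
    rw [Nat.factorial_succ]; push_cast; field_simp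
  rw [← hm, C_mul]
  ring

theorem X_dvd_expTrunc_sub_one {p : k[X]} (hp : X ∣ p) (r : ℕ) :
    X ∣ expTrunc (r + 1) p - 1 := by
  rw [expTrunc, sum_range_succ', pow_zero, Nat.factorial_zero, Nat.cast_one, inv_one, one_smul,
    add_sub_cancel_right]
  exact dvd_sum fun m _ => dvd_smul_of_dvd _ (dvd_pow hp m.succ_ne_zero)

theorem X_pow_succ_dvd_of_dvd_derivative [CharZero k] {f : k[X]} {n : ℕ} (h0 : X ∣ f)
    (h : X ^ n ∣ derivative f) : X ^ (n + 1) ∣ f := by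
  rw [X_pow_dvd_iff] at h ⊢
  rintro (_ | d) hd
  · exact X_dvd_iff.mp h0
  · have := h d (by omega)
    rw [coeff_derivative] at this
    exact (mul_eq_zero.mp this).resolve_right (by exact_mod_cast d.succ_ne_zero)

theorem X_pow_dvd_one_add_X_mul_expTrunc_sub_one [CharZero k] {N r : ℕ} (hr : r ≤ N) :
    X ^ r ∣ (1 + X) * expTrunc r (-logPoly N : k[X]) - 1 := by
  obtain _ | s := r
  · simp
  set L : k[X] := -logPoly N
  have hL : X ∣ L := (X_dvd_logPoly N).neg_right
  refine X_pow_succ_dvd_of_dvd_derivative ?_ ?_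
  · have := (X_dvd_expTrunc_sub_one hL s).mul_left (1 + X)
    convert this.add (dvd_refl X) using 1
    ring
  have hder : derivative ((1 + X) * expTrunc (s + 1) L - 1) =
      ((s ! : k)⁻¹) • L ^ s + (-X) ^ N * expTrunc s L := by
    have h1 : expTrunc (s + 1) L = expTrunc s L + ((s ! : k)⁻¹) • L ^ s := sum_range_succ _ _
    rw [derivative_sub, derivative_one, derivative_mul, derivative_expTrunc_succ, derivative_neg]
    simp only [derivative_add, derivative_one, derivative_X, zero_add]
    linear_combination h1 - expTrunc s L * derivative_logPoly_mul_one_add_X (k := k) N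
  rw [hder]
  exact dvd_add (dvd_smul_of_dvd _ (pow_dvd_pow_of_dvd hL s))
    (((pow_dvd_pow_of_dvd (dvd_neg.mpr dvd_rfl) s).trans (pow_dvd_pow _ (by omega))).mul_right _)

theorem aeval_apply_eq_zero_of_X_pow_dvd {R M : Type*} [CommRing R] [AddCommGroup M] [Module R M]
    {u : Module.End R M} {p : R[X]} {r : ℕ} {b : M} (hp : X ^ r ∣ p) (hb : (u ^ r) b = 0) :
    aeval u p b = 0 := by
  obtain ⟨q, rfl⟩ := hp
  rw [mul_comm, map_mul, map_pow, aeval_X, Module.End.mul_apply, hb, map_zero]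

variable {W : Type*} [AddCommGroup W] [Module k W]

theorem eq_zero_of_sum_pow_smul_eq_zero {S : Set k} (hS : S.Infinite) {v : ℕ →₀ W}
    (h : ∀ x ∈ S, (v.sum fun j w => x ^ j • w) = 0) : v = 0 := by
  ext j
  refine (Module.forall_dual_apply_eq_zero_iff k (v j)).mp fun f => ?_
  set p : k[X] := v.sum fun j w => monomial j (f w)
  have hroots : S ⊆ {x | p.IsRoot x} := fun x hx => by
    simp only [Set.mem_ofPred_eq, IsRoot.def, p, Finsupp.sum, eval_finsetSum, eval_monomial]
    rw [← map_zero f, ← h x hx, Finsupp.sum, map_sum]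
    exact sum_congr rfl fun i _ => by rw [map_smul, smul_eq_mul, mul_comm]
  have hp := congrArg (coeff · j) (p.eq_zero_of_infinite_isRoot (hS.mono hroots))
  by_cases hvj : v j = 0
  · simp [hvj]
  · simpa [p, Finsupp.sum, coeff_monomial, hvj] using hp

variable {γ : W ≃ₗ[k] W} {c : k}

theorem nablaOf_eq_aeval (N : ℕ) :
    nablaOf γ c N = aeval (γ.toLinearMap - LinearMap.id) (C c⁻¹ * logPoly N) := by
  rw [map_mul, aeval_C, ← Algebra.smul_def, nablaOf, logPoly, map_sum]
  simp [map_smul]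

theorem pow_sub_apply_nablaOf_pow_apply_eq_zero {N : ℕ} {a : W}
    (ha : ((γ.toLinearMap - LinearMap.id : W →ₗ[k] W) ^ N) a = 0) (i : ℕ) :
    ((γ.toLinearMap - LinearMap.id : W →ₗ[k] W) ^ (N - i)) ((nablaOf γ c N ^ i) a) = 0 := by
  have hpow : (γ.toLinearMap - LinearMap.id : W →ₗ[k] W) ^ (N - i) =
      aeval (γ.toLinearMap - LinearMap.id : W →ₗ[k] W) (X ^ (N - i) : k[X]) := by simp
  rw [← Module.End.mul_apply, nablaOf_eq_aeval, ← map_pow, hpow, ← map_mul]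
  refine aeval_apply_eq_zero_of_X_pow_dvd ?_ ha
  calc (X : k[X]) ^ N ∣ X ^ (N - i) * X ^ i := by rw [← pow_add]; exact pow_dvd_pow X (by omega)
    _ ∣ _ := mul_dvd_mul_left _ (pow_dvd_pow_of_dvd ((X_dvd_logPoly N).mul_left _) i)

theorem nablaOf_pow_apply_eq_zero {N : ℕ} {a : W}
    (ha : ((γ.toLinearMap - LinearMap.id : W →ₗ[k] W) ^ N) a = 0) {i : ℕ} (hi : N ≤ i) :
    (nablaOf γ c N ^ i) a = 0 := by
  simpa [Nat.sub_eq_zero_of_le hi] using pow_sub_apply_nablaOf_pow_apply_eq_zero (c := c) ha i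

theorem apply_sum_nablaOf_pow_apply [CharZero k] (hc : c ≠ 0) {N r : ℕ} (hr : r ≤ N) {b : W}
    (hb : ((γ.toLinearMap - LinearMap.id : W →ₗ[k] W) ^ r) b = 0) :
    γ (∑ t ∈ range r, ((t ! : k)⁻¹ * (-c) ^ t) • (nablaOf γ c N ^ t) b) = b := by
  have key := aeval_apply_eq_zero_of_X_pow_dvd (X_pow_dvd_one_add_X_mul_expTrunc_sub_one hr) hb
  have hL : aeval (γ.toLinearMap - LinearMap.id) (-logPoly N : k[X]) = (-c) • nablaOf γ c N := by
    rw [nablaOf_eq_aeval, map_mul, aeval_C, ← Algebra.smul_def, smul_smul, neg_mul,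
      mul_inv_cancel₀ hc, map_neg, neg_smul, one_smul]
  rw [map_sub, map_mul, map_one, LinearMap.sub_apply, sub_eq_zero, Module.End.mul_apply,
    expTrunc, map_sum] at key
  simpa [hL, _root_.smul_pow, smul_smul, LinearMap.sum_apply, -neg_smul] using key

/-- `G` acts on `W[X] = ℕ →₀ W` by `w X^j ↦ γ(w) (X + c)^j`. -/
def IsTwistedShift (γ : W ≃ₗ[k] W) (c : k) (G : (ℕ →₀ W) →ₗ[k] (ℕ →₀ W)) : Prop :=
  ∀ (j : ℕ) (w : W), G (Finsupp.single j w) =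
    ∑ i ∈ range (j + 1), ((j.choose i : k) * c ^ (j - i)) • Finsupp.single i (γ w)

variable {G : (ℕ →₀ W) →ₗ[k] (ℕ →₀ W)}

theorem IsTwistedShift.pow_single_apply (hG : IsTwistedShift γ c G) (n l i : ℕ) (w : W) :
    (G ^ n) (Finsupp.single l w) i =
      ((l.choose i : k) * (n * c) ^ (l - i)) • (γ.toLinearMap ^ n : W →ₗ[k] W) w := by
  induction n generalizing l w with
  | zero =>
    rcases lt_trichotomy i l with h | rfl | h
    · simp [h.ne', Nat.sub_ne_zero_of_lt h]
    · simp
    · simp [h.ne, Nat.choose_eq_zero_of_lt h]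
  | succ n ih =>
    rw [pow_succ, Module.End.mul_apply, hG, map_sum, Finsupp.finsetSum_apply]
    simp only [map_smul, Finsupp.smul_apply, ih, smul_smul, ← sum_smul]
    rw [sum_choose_mul_pow_mul_choose_mul_pow, pow_succ _ n, Module.End.mul_apply, Nat.cast_succ,
      add_one_mul]
    rfl

theorem IsTwistedShift.pow_apply (hG : IsTwistedShift γ c G) (n : ℕ) (v : ℕ →₀ W) (i : ℕ) :
    (G ^ n) v i = v.sum fun j w =>
      ((j.choose i : k) * (n * c) ^ (j - i)) • (γ.toLinearMap ^ n : W →ₗ[k] W) w := by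
  conv_lhs => rw [← Finsupp.sum_single v]
  rw [map_finsuppSum, Finsupp.sum_apply]
  exact Finsupp.sum_congr fun j _ => hG.pow_single_apply n j i _

theorem IsTwistedShift.single_apply (hG : IsTwistedShift γ c G) (l i : ℕ) (w : W) :
    G (Finsupp.single l w) i = ((l.choose i : k) * c ^ (l - i)) • γ w := by
  simpa using hG.pow_single_apply 1 l i w

theorem IsTwistedShift.apply (hG : IsTwistedShift γ c G) (v : ℕ →₀ W) (i : ℕ) :
    G v i = v.sum fun j w => ((j.choose i : k) * c ^ (j - i)) • γ w := by
  simpa using hG.pow_apply 1 v i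

/- Comparing coefficients in `G v = v` gives `u (v i) = -Σ_{j > i} C(j,i) c^(j-i) γ (v j)`, so
`u ^ m` kills `v i` as soon as `v` vanishes in all degrees `≥ i + m`. -/
theorem IsTwistedShift.exists_pow_apply_eq_zero (hG : IsTwistedShift γ c G) {v : ℕ →₀ W}
    (hv : G v = v) : ∃ N, ((γ.toLinearMap - LinearMap.id : W →ₗ[k] W) ^ N) (v 0) = 0 := by
  set u : W →ₗ[k] W := γ.toLinearMap - LinearMap.id
  have hγu (m : ℕ) (x : W) : (u ^ m) (γ x) = γ ((u ^ m) x) := by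
    have hcomm : Commute (γ.toLinearMap : Module.End k W) u :=
      (Commute.refl _).sub_right (Commute.one_right _)
    exact (LinearMap.congr_fun (hcomm.pow_right m).eq x).symm
  have key (m : ℕ) : ∀ i, (∀ j, i + m ≤ j → v j = 0) → (u ^ m) (v i) = 0 := by
    induction m with
    | zero => exact fun i h => h i le_rfl
    | succ m ih =>
      intro i h
      by_cases hi : v i = 0
      · rw [hi, map_zero]
      set S := ∑ j ∈ v.support.erase i, ((j.choose i : k) * c ^ (j - i)) • γ (v j)
      have hfix : v i = γ (v i) + S := by
        conv_lhs => rw [← hv, hG.apply, Finsupp.sum,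
          ← add_sum_erase _ _ (Finsupp.mem_support_iff.mpr hi)]
        simp [S]
      have hu : u (v i) = -S := by
        change γ (v i) - v i = -S
        nth_rw 2 [hfix]
        abel
      rw [pow_succ, Module.End.mul_apply, hu, map_neg, map_sum, neg_eq_zero]
      refine sum_eq_zero fun j hj => ?_
      rcases (mem_erase.mp hj).1.lt_or_gt with hji | hji
      · simp [Nat.choose_eq_zero_of_lt hji]
      · rw [map_smul, hγu, ih j fun j' hj' => h j' (by omega), map_zero, smul_zero]
  obtain ⟨D, hD⟩ := exists_nat_subset_range v.support
  exact ⟨D, key D 0 fun j hj => Finsupp.notMem_support_iff.mp fun hj' => by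
    have := mem_range.mp (hD hj'); omega⟩

theorem IsTwistedShift.eq_zero_of_apply_eq_self [CharZero k] (hc : c ≠ 0)
    (hG : IsTwistedShift γ c G) {v : ℕ →₀ W} (hv : G v = v) (h0 : v 0 = 0) : v = 0 := by
  refine eq_zero_of_sum_pow_smul_eq_zero (S := Set.range fun n : ℕ => (n : k) * c)
    (Set.infinite_range_of_injective fun m n h => by simpa [hc] using h) ?_
  rintro _ ⟨n, rfl⟩
  have hinj : Function.Injective (γ.toLinearMap ^ n : W →ₗ[k] W) := by
    rw [Module.End.coe_pow]; exact γ.injective.iterate n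
  have hvn : (G ^ n) v = v := by rw [Module.End.pow_apply, Function.iterate_fixed hv]
  refine hinj ((?_ : _ = (G ^ n) v 0).trans (by rw [hvn, h0, map_zero]))
  rw [hG.pow_apply, map_finsuppSum]
  simp

noncomputable def nablaExp (γ : W ≃ₗ[k] W) (c : k) (N : ℕ) (a : W) : ℕ →₀ W :=
  ∑ j ∈ range N, ((-1 : k) ^ j / (j ! : k)) • Finsupp.single j ((nablaOf γ c N ^ j) a)

theorem nablaExp_apply {N : ℕ} {a : W}
    (ha : ((γ.toLinearMap - LinearMap.id : W →ₗ[k] W) ^ N) a = 0) (i : ℕ) :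
    nablaExp γ c N a i = ((-1 : k) ^ i / (i ! : k)) • (nablaOf γ c N ^ i) a := by
  simp only [nablaExp, Finsupp.finsetSum_apply, Finsupp.smul_apply, Finsupp.single_apply,
    smul_ite, smul_zero, sum_ite_eq', mem_range]
  split_ifs with hi
  · rfl
  · rw [nablaOf_pow_apply_eq_zero ha (not_lt.mp hi), smul_zero]

theorem neg_one_pow_div_factorial_mul_choose_mul_pow [CharZero k] (i t : ℕ) (c : k) :
    (-1 : k) ^ (i + t) / ((i + t)! : k) * (((i + t).choose i : k) * c ^ t) =
      (-1) ^ i / (i ! : k) * ((t ! : k)⁻¹ * (-c) ^ t) := by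
  rw [Nat.cast_choose k (Nat.le_add_right i t), Nat.add_sub_cancel_left]
  have h₁ : ((i + t)! : k) ≠ 0 := by exact_mod_cast (i + t).factorial_ne_zero
  have h₂ : (i ! : k) ≠ 0 := by exact_mod_cast i.factorial_ne_zero
  have h₃ : (t ! : k) ≠ 0 := by exact_mod_cast t.factorial_ne_zero
  field_simp
  ring

theorem IsTwistedShift.apply_nablaExp [CharZero k] (hc : c ≠ 0) (hG : IsTwistedShift γ c G)
    {N : ℕ} {a : W} (ha : ((γ.toLinearMap - LinearMap.id : W →ₗ[k] W) ^ N) a = 0) :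
    G (nablaExp γ c N a) = nablaExp γ c N a := by
  ext i
  have hGE : G (nablaExp γ c N a) i = ((-1 : k) ^ i / (i ! : k)) • γ (∑ t ∈ range (N - i),
      ((t ! : k)⁻¹ * (-c) ^ t) • (nablaOf γ c N ^ t) ((nablaOf γ c N ^ i) a)) := by
    rw [nablaExp, map_sum, Finsupp.finsetSum_apply]
    simp only [map_smul, Finsupp.smul_apply, hG.single_apply, smul_smul]
    rw [← sum_subset (fun j hj => mem_range.mpr (mem_Ico.mp hj).2) ?_, sum_Ico_eq_sum_range,
      map_sum, smul_sum]
    · refine sum_congr rfl fun t _ => ?_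
      rw [map_smul, smul_smul, ← Module.End.mul_apply, ← pow_add, Nat.add_sub_cancel_left,
        add_comm t, neg_one_pow_div_factorial_mul_choose_mul_pow]
    · intro j _ hj
      rw [Nat.choose_eq_zero_of_lt (by grind), Nat.cast_zero, zero_mul, mul_zero, zero_smul]
  rw [hGE, apply_sum_nablaOf_pow_apply hc (Nat.sub_le N i)
    (pow_sub_apply_nablaOf_pow_apply_eq_zero ha i), nablaExp_apply ha]

theorem apply_eq_neg_succ_nsmul_apply_succ {ν : (ℕ →₀ W) →ₗ[k] (ℕ →₀ W)}
    (hν : ∀ (j : ℕ) (w : W), ν (Finsupp.single j w) = -(j • Finsupp.single (j - 1) w))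
    (v : ℕ →₀ W) (i : ℕ) : ν v i = -((i + 1) • v (i + 1)) := by
  have : (Finsupp.lapply i).comp ν = -((i + 1) • Finsupp.lapply (i + 1)) :=
    Finsupp.lhom_ext fun j w => by
      rcases j with _ | j
      · simp [hν]
      · simp +contextual [hν, Finsupp.single_apply]
  exact LinearMap.congr_fun this v

theorem IsTwistedShift.comp_commute (hG : IsTwistedShift γ c G) {ν : (ℕ →₀ W) →ₗ[k] (ℕ →₀ W)}
    (hν : ∀ (j : ℕ) (w : W), ν (Finsupp.single j w) = -(j • Finsupp.single (j - 1) w)) :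
    G ∘ₗ ν = ν ∘ₗ G :=
  Finsupp.lhom_ext fun j w => Finsupp.ext fun i => by
    simp only [LinearMap.comp_apply, apply_eq_neg_succ_nsmul_apply_succ hν, hν, map_neg, map_nsmul,
      Finsupp.neg_apply, Finsupp.smul_apply, hG.single_apply]
    rcases j with _ | j
    · simp
    rw [Nat.add_sub_cancel, show j + 1 - (i + 1) = j - i by omega, ← Nat.cast_smul_eq_nsmul k,
      ← Nat.cast_smul_eq_nsmul k, smul_smul, smul_smul]
    congr 2
    have h := congrArg (Nat.cast : ℕ → k) (Nat.add_one_mul_choose_eq j i)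
    push_cast at h ⊢
    linear_combination c ^ (j - i) * h

theorem nablaExp_apply_zero {N : ℕ} {a : W}
    (ha : ((γ.toLinearMap - LinearMap.id : W →ₗ[k] W) ^ N) a = 0) : nablaExp γ c N a 0 = a := by
  simp [nablaExp_apply ha]

theorem IsTwistedShift.eq_nablaExp_of_apply_eq_self [CharZero k] (hc : c ≠ 0)
    (hG : IsTwistedShift γ c G) {v : ℕ →₀ W} (hv : G v = v) {N : ℕ}
    (hN : ((γ.toLinearMap - LinearMap.id : W →ₗ[k] W) ^ N) (v 0) = 0) :
    v = nablaExp γ c N (v 0) :=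
  sub_eq_zero.mp <| hG.eq_zero_of_apply_eq_self hc (by rw [map_sub, hv, hG.apply_nablaExp hc hN])
    (by rw [Finsupp.sub_apply, nablaExp_apply_zero hN, sub_self])

end UnipotentLog

open UnipotentLog in
/-- Wu, Lemma `lemmagammanilpotent`, γ-version (abstract form): let `k` be a field of
characteristic zero, `W` a `k`-vector space, `γ` a `k`-linear automorphism of `W`, `c ≠ 0`,
and extend `γ` to `W[X]` by `γ(w·X^j) = γ(w)·(X+c)^j`.  Then the constant-term map is a
bijection from the fixed space `{v ∈ W[X] : γv = v}` onto
`W^{(γ-1)-nil} = {a : (γ-1)^N a = 0 for some N}`; its inverse sends `a` to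
`Σ_j ((-1)^j/j!)·∇^j(a)·X^j` with `∇ = (1/c)·log γ`; and under this bijection the
derivation `ν(w·X^j) = -j·w·X^{j-1}` corresponds to `∇`. -/
theorem stmt8 (k : Type*) [Field k] [CharZero k]
    (W : Type*) [AddCommGroup W] [Module k W]
    (γ : W ≃ₗ[k] W) (c : k) (hc : c ≠ 0)
    (G : (ℕ →₀ W) →ₗ[k] (ℕ →₀ W))
    (hG : ∀ (j : ℕ) (w : W),
      G (Finsupp.single j w) =
        ∑ i ∈ Finset.range (j + 1),
          ((j.choose i : k) * c ^ (j - i)) • Finsupp.single i (γ w))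
    (ν : (ℕ →₀ W) →ₗ[k] (ℕ →₀ W))
    (hν : ∀ (j : ℕ) (w : W), ν (Finsupp.single j w) = -(j • Finsupp.single (j - 1) w)) :
    Set.BijOn (fun v : ℕ →₀ W => v 0)
      {v : ℕ →₀ W | G v = v}
      {a : W | ∃ N : ℕ, (((γ.toLinearMap - LinearMap.id : W →ₗ[k] W)) ^ N) a = 0} ∧
    (∀ (a : W) (N : ℕ), (((γ.toLinearMap - LinearMap.id : W →ₗ[k] W)) ^ N) a = 0 →
      G (∑ j ∈ Finset.range N,
          ((-1 : k) ^ j / (j.factorial : k)) • Finsupp.single j ((nablaOf γ c N ^ j) a)) =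
        (∑ j ∈ Finset.range N,
          ((-1 : k) ^ j / (j.factorial : k)) • Finsupp.single j ((nablaOf γ c N ^ j) a)) ∧
      (∑ j ∈ Finset.range N,
          ((-1 : k) ^ j / (j.factorial : k)) • Finsupp.single j ((nablaOf γ c N ^ j) a)) 0
        = a) ∧
    (∀ v : ℕ →₀ W, G v = v →
      G (ν v) = ν v ∧
      ∀ N : ℕ, (((γ.toLinearMap - LinearMap.id : W →ₗ[k] W)) ^ N) (v 0) = 0 →
        (ν v) 0 = nablaOf γ c N (v 0)) := by
  have hG : IsTwistedShift γ c G := hG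
  refine ⟨⟨fun v hv => hG.exists_pow_apply_eq_zero hv, ?_, ?_⟩,
    fun a N ha => ⟨hG.apply_nablaExp hc ha, nablaExp_apply_zero ha⟩, fun v hv => ⟨?_, ?_⟩⟩
  · intro v hv w hw hvw
    exact sub_eq_zero.mp <| hG.eq_zero_of_apply_eq_self hc (by rw [map_sub, hv.out, hw.out])
      (by rw [Finsupp.sub_apply]; exact sub_eq_zero.mpr hvw)
  · rintro a ⟨N, ha⟩
    exact ⟨nablaExp γ c N a, hG.apply_nablaExp hc ha, nablaExp_apply_zero ha⟩
  · rw [← LinearMap.comp_apply, hG.comp_commute hν, LinearMap.comp_apply, hv]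
  · intro N hN
    have hv₁ := DFunLike.congr_fun (hG.eq_nablaExp_of_apply_eq_self hc hv hN) 1
    rw [apply_eq_neg_succ_nsmul_apply_succ hν, zero_add, hv₁, nablaExp_apply hN]
    simp
end

section
/- Let k be a field of characteristic zero, W a k-vector space, and ∇ : W → W a k-linear endomorphism. Extend ∇ to a k-linear endomorphism of the polynomial module W[X] = ⊕_{j≥0} W·X^j by ∇(w·X^j) = ∇(w)·X^j + j·w·X^{j−1}. Then the constant-term map Σ_j a_j X^j ↦ a_0 restricts to a k-linear bijection from the kernel {v ∈ W[X] : ∇(v) = 0} onto the subspace W^{∇-nil} := {a ∈ W : ∇^N a = 0 for some N ≥ 1}, with inverse a ↦ Σ_{j≥0} ((−1)^j/j!)·∇^j(a)·X^j. -/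
/-!
A horizontal vector `v = Σ vₙ Xⁿ` is the same as a coefficient sequence with
`∇ vₙ + (n+1) vₙ₊₁ = 0`, and such a sequence is forced to be `vₙ = ((-1)ⁿ/n!) ∇ⁿ v₀`.
Finite support of `v` then makes `v₀` nilpotent; conversely, for nilpotent `a` the sequence
`((-1)ⁿ/n!) ∇ⁿ a` satisfies the recursion and vanishes from `N` on, so it is a polynomial.
-/

open Finset Finsupp

section Horizontal

variable {k W : Type*} [Semiring k] [AddCommMonoid W] [Module k W]

/-- `c` is the coefficient sequence of a `∇`-horizontal `Σ cₙ Xⁿ`, for `∇ X = 1`. -/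
def IsHorizontal (nabla : W →ₗ[k] W) (c : ℕ → W) : Prop :=
  ∀ n, nabla (c n) + (n + 1) • c (n + 1) = 0

variable {nabla : W →ₗ[k] W} {D : (ℕ →₀ W) →ₗ[k] (ℕ →₀ W)}

theorem apply_coeff_of_map_single
    (hD : ∀ (j : ℕ) (w : W), D (single j w) = single j (nabla w) + j • single (j - 1) w)
    (v : ℕ →₀ W) (n : ℕ) : D v n = nabla (v n) + (n + 1) • v (n + 1) := by
  induction v using Finsupp.induction_linear with
  | zero => simp
  | add f g hf hg =>
    simp only [map_add, Finsupp.add_apply, hf, hg, smul_add]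
    abel
  | single j w =>
    rw [hD]
    simp only [Finsupp.add_apply, Finsupp.smul_apply, single_apply]
    split_ifs <;> try omega
    · obtain rfl : j = 0 := by omega
      simp
    · simp
    · simp only [map_zero, zero_add]
      congr 1
    · simp

theorem map_eq_zero_iff_isHorizontal
    (hD : ∀ (j : ℕ) (w : W), D (single j w) = single j (nabla w) + j • single (j - 1) w)
    (v : ℕ →₀ W) : D v = 0 ↔ IsHorizontal nabla v := by
  simp only [IsHorizontal, Finsupp.ext_iff, apply_coeff_of_map_single hD, Finsupp.coe_zero,
    Pi.zero_apply]

end Horizontal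

def negExpCoeff (k : Type*) [DivisionRing k] (n : ℕ) : k := (-1) ^ n / n.factorial

section NegExpCoeff

variable {k : Type*} [Field k]

@[simp]
theorem negExpCoeff_zero : negExpCoeff k 0 = 1 := by
  simp [negExpCoeff]

variable [CharZero k]

theorem negExpCoeff_ne_zero (n : ℕ) : negExpCoeff k n ≠ 0 :=
  div_ne_zero (pow_ne_zero _ (neg_ne_zero.2 one_ne_zero)) (Nat.cast_ne_zero.2 n.factorial_ne_zero)

theorem succ_mul_negExpCoeff_succ (n : ℕ) :
    ((n : k) + 1) * negExpCoeff k (n + 1) = -negExpCoeff k n := by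
  have hn : (n : k) + 1 ≠ 0 := n.cast_add_one_ne_zero
  simp only [negExpCoeff, Nat.factorial_succ, Nat.cast_mul, Nat.cast_succ, pow_succ]
  field_simp

end NegExpCoeff

section Recurrence

variable {k W : Type*} [Field k] [CharZero k] [AddCommGroup W] [Module k W]
  (nabla : W →ₗ[k] W)

theorem isHorizontal_negExpCoeff_smul_pow (a : W) :
    IsHorizontal nabla fun n => negExpCoeff k n • (nabla ^ n) a := by
  intro n
  rw [← Nat.cast_smul_eq_nsmul k, smul_smul, Nat.cast_succ, succ_mul_negExpCoeff_succ,
    map_smul, pow_succ', Module.End.mul_apply, neg_smul, add_neg_cancel]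

theorem IsHorizontal.eq_negExpCoeff_smul_pow {c : ℕ → W} (hc : IsHorizontal nabla c) (n : ℕ) :
    c n = negExpCoeff k n • (nabla ^ n) (c 0) := by
  induction n with
  | zero => simp
  | succ n ih =>
    apply smul_right_injective W (n.cast_add_one_ne_zero : (n : k) + 1 ≠ 0)
    have hexp : nabla (c n) + (n + 1) • (negExpCoeff k (n + 1) • (nabla ^ (n + 1)) (c 0)) = 0 :=
      ih ▸ isHorizontal_negExpCoeff_smul_pow nabla (c 0) n
    have h := add_left_cancel ((hc n).trans hexp.symm)
    simpa only [← Nat.cast_smul_eq_nsmul k, Nat.cast_succ] using h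

theorem IsHorizontal.exists_pow_apply_eq_zero {v : ℕ →₀ W} (hv : IsHorizontal nabla v) :
    ∃ N, (nabla ^ N) (v 0) = 0 := by
  obtain ⟨N, hN⟩ := Infinite.exists_notMem_finset v.support
  have h : negExpCoeff k N • (nabla ^ N) (v 0) = 0 := by
    rw [← hv.eq_negExpCoeff_smul_pow]
    exact notMem_support_iff.1 hN
  exact ⟨N, (smul_eq_zero.1 h).resolve_left (negExpCoeff_ne_zero N)⟩

end Recurrence

section TruncExpSeries

variable {k W : Type*} [Field k] [AddCommGroup W] [Module k W] (nabla : W →ₗ[k] W)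

/-- The truncation at degree `N` of `exp(-X∇) a`. -/
noncomputable def truncExpSeries (N : ℕ) (a : W) : ℕ →₀ W :=
  ∑ j ∈ range N, negExpCoeff k j • single j ((nabla ^ j) a)

theorem truncExpSeries_apply_of_pow_eq_zero {N : ℕ} {a : W} (ha : (nabla ^ N) a = 0) (n : ℕ) :
    truncExpSeries nabla N a n = negExpCoeff k n • (nabla ^ n) a := by
  simp only [truncExpSeries, finsetSum_apply, Finsupp.smul_apply, single_apply,
    smul_ite, smul_zero, Finset.sum_ite_eq', mem_range]
  split_ifs with hn
  · rfl
  · rw [Module.End.pow_map_zero_of_le (not_lt.1 hn) ha, smul_zero]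

end TruncExpSeries

/-- Wu, Lemma `lemmagammanilpotent`, ∇-version (abstract form): let `k` be a field of
characteristic zero, `W` a `k`-vector space, `∇` a `k`-linear endomorphism of `W`, extended
to the polynomial module `W[X] = ⊕_j W·X^j` by `∇(w·X^j) = ∇(w)·X^j + j·w·X^{j-1}`.  Then
the constant-term map is a bijection from `{v ∈ W[X] : ∇v = 0}` onto
`W^{∇-nil} = {a : ∇^N a = 0 for some N}`, with inverse
`a ↦ Σ_j ((-1)^j/j!)·∇^j(a)·X^j`. -/
theorem stmt9 (k : Type*) [Field k] [CharZero k]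
    (W : Type*) [AddCommGroup W] [Module k W]
    (nabla : W →ₗ[k] W)
    (D : (ℕ →₀ W) →ₗ[k] (ℕ →₀ W))
    (hD : ∀ (j : ℕ) (w : W),
      D (Finsupp.single j w) = Finsupp.single j (nabla w) + j • Finsupp.single (j - 1) w) :
    Set.BijOn (fun v : ℕ →₀ W => v 0)
      {v : ℕ →₀ W | D v = 0} {a : W | ∃ N : ℕ, (nabla ^ N) a = 0} ∧
    ∀ (a : W) (N : ℕ), (nabla ^ N) a = 0 →
      D (∑ j ∈ Finset.range N,
          ((-1 : k) ^ j / (j.factorial : k)) • Finsupp.single j ((nabla ^ j) a)) = 0 ∧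
      (∑ j ∈ Finset.range N,
          ((-1 : k) ^ j / (j.factorial : k)) • Finsupp.single j ((nabla ^ j) a)) 0 = a := by
  have hinv (a : W) (N : ℕ) (ha : (nabla ^ N) a = 0) :
      D (truncExpSeries nabla N a) = 0 ∧ truncExpSeries nabla N a 0 = a := by
    rw [map_eq_zero_iff_isHorizontal hD]
    simp only [IsHorizontal, truncExpSeries_apply_of_pow_eq_zero nabla ha]
    exact ⟨isHorizontal_negExpCoeff_smul_pow nabla a, by simp⟩
  refine ⟨⟨fun v hv => ((map_eq_zero_iff_isHorizontal hD v).1 hv).exists_pow_apply_eq_zero,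
    ?_, fun a ⟨N, ha⟩ => ⟨_, hinv a N ha⟩⟩, hinv⟩
  intro v₁ hv₁ v₂ hv₂ (h : v₁ 0 = v₂ 0)
  ext n
  rw [((map_eq_zero_iff_isHorizontal hD v₁).1 hv₁).eq_negExpCoeff_smul_pow,
    ((map_eq_zero_iff_isHorizontal hD v₂).1 hv₂).eq_negExpCoeff_smul_pow, h]
end

section
/- In the setting described, one has ∏_{i=a}^{2b−a} (γ − ε^i)^l (D⁺) ⊆ t^{b−a+1}·D⁺, where l = (b−a+1)·n and (γ − ε^i) denotes the additive endomorphism d ↦ γ(d) − ε^i·d of D (these endomorphisms commute with each other). -/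
open Pointwise

/-- The composite of the commuting operators `(γ - ε^i)^l`, `i` running through the finite
set `s ⊆ ℤ` (they pairwise commute, so the order of composition is irrelevant). -/
noncomputable def gammaEpsProd {k D : Type*} [Field k] [AddCommGroup D] [Module k D]
    (γ : D → D) (ε : k) (l : ℕ) (s : Finset ℤ) : D → D :=
  (s.sort (· ≤ ·)).foldr (fun i g => (fun y : D => γ y - ε ^ i • y)^[l] ∘ g) id

open Polynomial Matrix
open scoped PowerSeries

/-!
Write `t = X`. Since `γ` is semilinear for `f(X) ↦ f(εX)`, for every polynomial `p` one has
`p(γ)(tʲ y) = tʲ · p(εʲ X)(γ)(y)`. Modulo `t`, `γ` acts on `D⁺/tD⁺` through the constant matrix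
`M(0)`, so by Cayley–Hamilton every multiple of its characteristic polynomial, in particular
`Q = ∏_{c=a}^{b} (X - εᶜ)ⁿ`, maps `D⁺` into `tD⁺` when evaluated at `γ`. For
`P = ∏_{i=a}^{2b-a} (X - εⁱ)ⁿ` and `0 ≤ j ≤ b - a`, the factors `i = c + j` of `P(εʲ X)` make it
a multiple of `Q`, so `P(γ)` maps `tʲ D⁺` into `tʲ⁺¹ D⁺`. The operator of the theorem is
`P(γ)^(b-a+1)`.
-/

theorem Polynomial.aeval_comp_eq_comp_aeval {R M N : Type*} [CommSemiring R] [AddCommMonoid M]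
    [Module R M] [AddCommMonoid N] [Module R N] {f : Module.End R M} {g : Module.End R N}
    {e : N →ₗ[R] M} (h : f ∘ₗ e = e ∘ₗ g) (p : R[X]) : aeval f p ∘ₗ e = e ∘ₗ aeval g p := by
  induction p using Polynomial.induction_on' with
  | add p q hp hq => simp only [map_add, LinearMap.add_comp, LinearMap.comp_add, hp, hq]
  | monomial n a =>
    simp only [aeval_monomial, ← Algebra.smul_def, LinearMap.smul_comp, LinearMap.comp_smul,
      Module.End.commute_pow_left_of_commute h n]

theorem PowerSeries.rescale_smul {R : Type*} [CommSemiring R] (a r : R) (g : R⟦X⟧) :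
    rescale a (r • g) = r • rescale a g := by
  ext n
  simp [mul_left_comm]

theorem PowerSeries.constantCoeff_rescale {R : Type*} [CommSemiring R] (a : R) (g : R⟦X⟧) :
    constantCoeff (rescale a g) = constantCoeff g := by
  rw [← coeff_zero_eq_constantCoeff_apply, coeff_rescale, pow_zero, one_mul,
    coeff_zero_eq_constantCoeff_apply]

section RescaleSemilinear

variable {k D : Type*} [CommRing k] [AddCommGroup D] [Module k⟦X⟧ D] [Module k D]
  [IsScalarTower k k⟦X⟧ D] {ε : k}

theorem PowerSeries.C_smul (r : k) (d : D) : (PowerSeries.C r : k⟦X⟧) • d = r • d := by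
  rw [← smul_one_smul k⟦X⟧ r d, PowerSeries.smul_eq_C_mul, mul_one]

theorem map_smul_of_map_powerSeries_smul {φ : D → D}
    (hφ : ∀ (g : k⟦X⟧) (d : D), φ (g • d) = PowerSeries.rescale ε g • φ d) (r : k) (d : D) :
    φ (r • d) = r • φ d := by
  rw [← smul_one_smul k⟦X⟧ r d, hφ, PowerSeries.rescale_smul, map_one, smul_one_smul]

variable {f : Module.End k D}

theorem aeval_apply_X_pow_smul
    (hf : ∀ (g : k⟦X⟧) (d : D), f (g • d) = PowerSeries.rescale ε g • f d)
    (p : k[X]) (j : ℕ) (y : D) :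
    aeval f p ((PowerSeries.X : k⟦X⟧) ^ j • y) =
      (PowerSeries.X : k⟦X⟧) ^ j • aeval f (p.comp (C (ε ^ j) * X)) y := by
  let u : D →ₗ[k] D := DistribSMul.toLinearMap k D ((PowerSeries.X : k⟦X⟧) ^ j)
  have hu : f ∘ₗ u = u ∘ₗ (ε ^ j • f) := by
    ext y
    change f ((PowerSeries.X : k⟦X⟧) ^ j • y) = (PowerSeries.X : k⟦X⟧) ^ j • (ε ^ j • f y)
    rw [hf, map_pow, PowerSeries.rescale_X, mul_pow, ← map_pow, mul_comm, mul_smul,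
      PowerSeries.C_smul]
  have := LinearMap.congr_fun (aeval_comp_eq_comp_aeval hu p) y
  simpa [aeval_comp, Algebra.smul_def, u] using this

variable {ι : Type*} [Fintype ι]

noncomputable def rescaleMulVec (ε : k) (M : Matrix ι ι k⟦X⟧) : Module.End k (ι → k⟦X⟧) where
  toFun c := M *ᵥ fun i => PowerSeries.rescale ε (c i)
  map_add' c c' := by simp only [Pi.add_apply, map_add]; exact Matrix.mulVec_add M _ _
  map_smul' r c := by
    simp only [Pi.smul_apply, PowerSeries.rescale_smul]; exact Matrix.mulVec_smul M r _


theorem rescaleMulVec_apply (M : Matrix ι ι k⟦X⟧) (c : ι → k⟦X⟧) :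
    rescaleMulVec ε M c = M *ᵥ fun i => PowerSeries.rescale ε (c i) := rfl

theorem comp_linearCombination_eq
    (hf : ∀ (g : k⟦X⟧) (d : D), f (g • d) = PowerSeries.rescale ε g • f d)
    (v : ι → D) (M : Matrix ι ι k⟦X⟧) (hM : ∀ j, f (v j) = ∑ i, M i j • v i) :
    f ∘ₗ (Fintype.linearCombination k⟦X⟧ v).restrictScalars k =
      (Fintype.linearCombination k⟦X⟧ v).restrictScalars k ∘ₗ rescaleMulVec ε M := by
  ext c
  simp only [LinearMap.comp_apply, LinearMap.restrictScalars_apply,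
    Fintype.linearCombination_apply, map_sum, hf, hM, Finset.smul_sum, smul_smul,
    rescaleMulVec_apply, Matrix.mulVec, dotProduct, Finset.sum_smul]
  rw [Finset.sum_comm]
  simp_rw [mul_comm]

theorem constantCoeff_aeval_rescaleMulVec [DecidableEq ι] (M : Matrix ι ι k⟦X⟧) {q : k[X]}
    (hq : (M.map PowerSeries.constantCoeff).charpoly ∣ q) (c : ι → k⟦X⟧) (i : ι) :
    PowerSeries.constantCoeff (aeval (rescaleMulVec ε M) q c i) = 0 := by
  let ρ : (ι → k⟦X⟧) →ₗ[k] (ι → k) := (PowerSeries.coeff 0).compLeft ι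
  have hρ : toLinAlgEquiv' (M.map PowerSeries.constantCoeff) ∘ₗ ρ = ρ ∘ₗ rescaleMulVec ε M := by
    refine LinearMap.ext fun c => funext fun i => ?_
    simp [ρ, toLinAlgEquiv'_apply, rescaleMulVec_apply, Matrix.mulVec, dotProduct,
      PowerSeries.constantCoeff_rescale]
  have hzero : aeval (toLinAlgEquiv' (M.map PowerSeries.constantCoeff)) q = 0 := by
    rw [aeval_algEquiv, AlgHom.comp_apply,
      aeval_eq_zero_of_dvd_aeval_eq_zero hq (aeval_self_charpoly _), map_zero]
  have := LinearMap.congr_fun (aeval_comp_eq_comp_aeval hρ q) c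
  rw [hzero] at this
  simpa [ρ, PowerSeries.coeff_zero_eq_constantCoeff_apply] using (congr_fun this i).symm

theorem aeval_mem_X_smul_span [DecidableEq ι]
    (hf : ∀ (g : k⟦X⟧) (d : D), f (g • d) = PowerSeries.rescale ε g • f d)
    (v : ι → D) (M : Matrix ι ι k⟦X⟧) (hM : ∀ j, f (v j) = ∑ i, M i j • v i) {q : k[X]}
    (hq : (M.map PowerSeries.constantCoeff).charpoly ∣ q) {z : D}
    (hz : z ∈ Submodule.span k⟦X⟧ (Set.range v)) :
    aeval f q z ∈ (PowerSeries.X : k⟦X⟧) • (Submodule.span k⟦X⟧ (Set.range v) : Set D) := by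
  obtain ⟨c, rfl⟩ := (Submodule.mem_span_range_iff_exists_fun k⟦X⟧).1 hz
  choose w hw using fun i =>
    PowerSeries.X_dvd_iff.2 (constantCoeff_aeval_rescaleMulVec (ε := ε) M hq c i)
  refine Set.mem_smul_set.2 ⟨Fintype.linearCombination k⟦X⟧ v w, ?_, ?_⟩
  · rw [← Fintype.range_linearCombination]
    exact LinearMap.mem_range_self _ _
  · have := LinearMap.congr_fun
      (aeval_comp_eq_comp_aeval (comp_linearCombination_eq hf v M hM) q) c
    simp only [LinearMap.comp_apply, LinearMap.restrictScalars_apply] at this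
    rw [← Fintype.linearCombination_apply, this, ← map_smul]
    exact congrArg _ (funext fun i => (hw i).symm)

theorem aeval_pow_mem_X_pow_smul
    (hf : ∀ (g : k⟦X⟧) (d : D), f (g • d) = PowerSeries.rescale ε g • f d)
    {N : Submodule k⟦X⟧ D} {P Q : k[X]}
    (hQ : ∀ q, Q ∣ q → ∀ z ∈ N, aeval f q z ∈ (PowerSeries.X : k⟦X⟧) • (N : Set D)) :
    ∀ m : ℕ, (∀ j < m, Q ∣ P.comp (C (ε ^ j) * X)) →
      ∀ z ∈ N, aeval f (P ^ m) z ∈ (PowerSeries.X : k⟦X⟧) ^ m • (N : Set D)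
  | 0, _, z, hz => Set.mem_smul_set.2 ⟨z, hz, by simp⟩
  | m + 1, hP, z, hz => by
    obtain ⟨y, hy, hyz⟩ :=
      Set.mem_smul_set.1 (aeval_pow_mem_X_pow_smul hf hQ m (fun j hj => hP j (by omega)) z hz)
    obtain ⟨w, hw, hwy⟩ := Set.mem_smul_set.1 (hQ _ (hP m (by omega)) y hy)
    refine Set.mem_smul_set.2 ⟨w, hw, ?_⟩
    rw [pow_succ' P, map_mul, Module.End.mul_apply, ← hyz, aeval_apply_X_pow_smul hf, ← hwy,
      smul_smul, ← pow_succ]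

end RescaleSemilinear

theorem prod_X_sub_C_zpow_dvd_comp {k : Type*} [Field k] {ε : k} (hε : ε ≠ 0) (n j : ℕ)
    {s t : Finset ℤ} (hst : ∀ c ∈ s, c + j ∈ t) :
    ∏ c ∈ s, (X - C (ε ^ c)) ^ n ∣ (∏ i ∈ t, (X - C (ε ^ i)) ^ n).comp (C (ε ^ j) * X) := by
  simp only [prod_comp, pow_comp, sub_comp, X_comp, C_comp]
  calc ∏ c ∈ s, (X - C (ε ^ c)) ^ n
      ∣ ∏ c ∈ s, (C (ε ^ j) * X - C (ε ^ (c + j))) ^ n :=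
        Finset.prod_dvd_prod_of_dvd _ _ fun c _ => pow_dvd_pow_of_dvd
          ⟨C (ε ^ j), by rw [zpow_add₀ hε, zpow_natCast, map_mul]; ring⟩ n
    _ = ∏ i ∈ s.image (· + (j : ℤ)), (C (ε ^ j) * X - C (ε ^ i)) ^ n :=
        (Finset.prod_image (f := fun i => (C (ε ^ j) * X - C (ε ^ i)) ^ n)
          fun _ _ _ _ h => add_right_cancel h).symm
    _ ∣ ∏ i ∈ t, (C (ε ^ j) * X - C (ε ^ i)) ^ n :=
        Finset.prod_dvd_prod_of_subset _ _ _ (Finset.image_subset_iff.2 hst)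

theorem gammaEpsProd_eq_aeval {k D : Type*} [Field k] [AddCommGroup D] [Module k D]
    (f : Module.End k D) (ε : k) (l : ℕ) (s : Finset ℤ) :
    gammaEpsProd f ε l s = aeval f (∏ i ∈ s, (X - C (ε ^ i)) ^ l) := by
  have foldr_eq (L : List ℤ) : L.foldr (fun i g => (fun y : D => f y - ε ^ i • y)^[l] ∘ g) id
      = aeval f (L.map fun i => (X - C (ε ^ i)) ^ l).prod := by
    induction L with
    | nil => simp [Module.End.one_eq_id]
    | cons i L ih =>
      have : (fun y : D => f y - ε ^ i • y) = aeval f (X - C (ε ^ i)) := by ext; simp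
      rw [List.foldr_cons, ih, this, List.map_cons, List.prod_cons, map_mul, map_pow,
        Module.End.coe_mul, Module.End.coe_pow]
  rw [gammaEpsProd, foldr_eq, Finset.prod_eq_multiset_prod, ← Finset.sort_eq s (· ≤ ·),
    Multiset.map_coe, Multiset.prod_coe]

section LaurentSeries

variable {k D : Type*} [Field k] [AddCommGroup D] [Module (LaurentSeries k) D] [Module k⟦X⟧ D]
  [IsScalarTower k⟦X⟧ (LaurentSeries k) D]

theorem isScalarTower_powerSeries_of_laurentSeries [Module k D]
    [IsScalarTower k (LaurentSeries k) D] : IsScalarTower k k⟦X⟧ D where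
  smul_assoc r g d := by
    rw [← algebraMap_smul (LaurentSeries k) (r • g) d, ← algebraMap_smul (LaurentSeries k) g d,
      PowerSeries.smul_eq_C_mul, map_mul, LaurentSeries.coe_algebraMap,
      HahnSeries.ofPowerSeries_C, HahnSeries.C_mul_eq_smul, smul_assoc]

theorem map_algebraMap_powerSeries {ε : k} {σ : LaurentSeries k ≃+* LaurentSeries k}
    (hσ : ∀ (f : LaurentSeries k) (i : ℤ), (σ f).coeff i = ε ^ i * f.coeff i) (g : k⟦X⟧) :
    σ (algebraMap k⟦X⟧ (LaurentSeries k) g) =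
      algebraMap k⟦X⟧ (LaurentSeries k) (PowerSeries.rescale ε g) := by
  ext i
  rw [hσ, LaurentSeries.coe_algebraMap, PowerSeries.coeff_coe, PowerSeries.coeff_coe]
  split_ifs with h
  · rw [mul_zero]
  · rw [PowerSeries.coeff_rescale, ← zpow_natCast]
    congr 2
    omega

theorem map_powerSeries_smul {ε : k} {σ : LaurentSeries k ≃+* LaurentSeries k}
    (hσ : ∀ (f : LaurentSeries k) (i : ℤ), (σ f).coeff i = ε ^ i * f.coeff i)
    (γ : D →ₛₗ[σ.toRingHom] D) (g : k⟦X⟧) (d : D) :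
    γ (g • d) = PowerSeries.rescale ε g • γ d := by
  rw [← algebraMap_smul (LaurentSeries k) g d, γ.map_smulₛₗ,
    ← algebraMap_smul (LaurentSeries k) (PowerSeries.rescale ε g)]
  exact congrArg (· • γ d) (map_algebraMap_powerSeries hσ g)

theorem single_one_pow_smul_eq_X_pow_smul (m : ℕ) (S : Set D) :
    (HahnSeries.single (1 : ℤ) (1 : k) : LaurentSeries k) ^ m • S =
      (PowerSeries.X : k⟦X⟧) ^ m • S := by
  ext x
  simp [Set.mem_smul_set, ← algebraMap_smul (LaurentSeries k) ((PowerSeries.X : k⟦X⟧) ^ m)]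

end LaurentSeries

theorem stmt12_general (k : Type*) [Field k] (n : ℕ) (a b : ℤ) (hab : a ≤ b)
    (ε : k) (hε0 : ε ≠ 0)
    (σ : LaurentSeries k ≃+* LaurentSeries k)
    (hσ : ∀ (f : LaurentSeries k) (i : ℤ), (σ f).coeff i = ε ^ i * f.coeff i)
    (D : Type*) [AddCommGroup D] [Module (LaurentSeries k) D]
    [Module (PowerSeries k) D] [IsScalarTower (PowerSeries k) (LaurentSeries k) D]
    [Module k D] [IsScalarTower k (LaurentSeries k) D]
    (Dplus : Submodule (PowerSeries k) D)
    (bD : Module.Basis (Fin n) (PowerSeries k) Dplus)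
    (γ : D →ₛₗ[σ.toRingHom] D)
    (M : Matrix (Fin n) (Fin n) (PowerSeries k))
    (hM : ∀ j : Fin n, γ (bD j : D) = ∑ i : Fin n, M i j • ((bD i : D)))
    (hchar : (M.map (PowerSeries.constantCoeff (R := k))).charpoly ∣
      ∏ c ∈ Finset.Icc a b, (Polynomial.X - Polynomial.C (ε ^ c)) ^ n) :
    ∀ x ∈ Dplus,
      gammaEpsProd (⇑γ) ε ((b - a + 1).toNat * n) (Finset.Icc a (2 * b - a)) x ∈
        (HahnSeries.single (1 : ℤ) (1 : k) : LaurentSeries k) ^ (b - a + 1) •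
          (Dplus : Set D) := by
  have := isScalarTower_powerSeries_of_laurentSeries (k := k) (D := D)
  have hγ := map_powerSeries_smul hσ γ
  let γk : Module.End k D :=
    { toFun := γ, map_add' := map_add γ, map_smul' := map_smul_of_map_powerSeries_smul hγ }
  have hDplus : Submodule.span k⟦X⟧ (Set.range fun i => (bD i : D)) = Dplus := by
    rw [Set.range_comp', ← Dplus.coe_subtype, Submodule.span_image, bD.span_eq,
      Submodule.map_subtype_top]
  intro x hx
  have key := aeval_pow_mem_X_pow_smul (f := γk) hγ (N := Dplus)
    (P := ∏ i ∈ Finset.Icc a (2 * b - a), (X - C (ε ^ i)) ^ n)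
    (fun q hq z hz => by
      rw [← hDplus] at hz ⊢
      exact aeval_mem_X_smul_span hγ _ M hM (hchar.trans hq) hz)
    (b - a + 1).toNat
    (fun j hj => prod_X_sub_C_zpow_dvd_comp hε0 n j fun c hc => by
      simp only [Finset.mem_Icc] at hc ⊢; omega) x hx
  rw [← Finset.prod_pow] at key
  simp only [← pow_mul, mul_comm n, ← gammaEpsProd_eq_aeval] at key
  rw [← Int.toNat_of_nonneg (by omega : 0 ≤ b - a + 1), zpow_natCast,
    single_one_pow_smul_eq_X_pow_smul]
  exact key

/-- Wu, Claim `claimcharacteristicpolynomials` (abstract form): in the setting of a free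
rank-`n` `k[[t]]`-lattice `D⁺` in `D` with a `σ`-semilinear automorphism `γ` whose
characteristic polynomial on `D⁺/tD⁺` divides `∏_{c=a}^{b}(T - ε^c)^n`, one has
`∏_{i=a}^{2b-a} (γ - ε^i)^l (D⁺) ⊆ t^{b-a+1}·D⁺` with `l = (b-a+1)·n`. -/
theorem stmt12 (k : Type*) [Field k] (n : ℕ) (a b : ℤ) (hab : a ≤ b)
    (ε : k) (hε0 : ε ≠ 0) (hε : ∀ i : ℤ, i ≠ 0 → ε ^ i ≠ 1)
    (σ : LaurentSeries k ≃+* LaurentSeries k)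
    (hσ : ∀ (f : LaurentSeries k) (i : ℤ), (σ f).coeff i = ε ^ i * f.coeff i)
    (D : Type*) [AddCommGroup D] [Module (LaurentSeries k) D]
    [Module (PowerSeries k) D] [IsScalarTower (PowerSeries k) (LaurentSeries k) D]
    [Module k D] [IsScalarTower k (LaurentSeries k) D]
    (Dplus : Submodule (PowerSeries k) D)
    (hspan : Submodule.span (LaurentSeries k) (Dplus : Set D) = ⊤)
    (bD : Module.Basis (Fin n) (PowerSeries k) Dplus)
    (γ : D →ₛₗ[σ.toRingHom] D) (hbij : Function.Bijective γ)
    (hstab : ⇑γ '' (Dplus : Set D) = (Dplus : Set D))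
    (M : Matrix (Fin n) (Fin n) (PowerSeries k))
    (hM : ∀ j : Fin n, γ (bD j : D) = ∑ i : Fin n, M i j • ((bD i : D)))
    (hchar : (M.map (PowerSeries.constantCoeff (R := k))).charpoly ∣
      ∏ c ∈ Finset.Icc a b, (Polynomial.X - Polynomial.C (ε ^ c)) ^ n) :
    ∀ x ∈ Dplus,
      gammaEpsProd (⇑γ) ε ((b - a + 1).toNat * n) (Finset.Icc a (2 * b - a)) x ∈
        (HahnSeries.single (1 : ℤ) (1 : k) : LaurentSeries k) ^ (b - a + 1) •
          (Dplus : Set D) :=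
  stmt12_general k n a b hab ε hε0 σ hσ D Dplus bD γ M hM hchar
end
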